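/- arXiv:0705.0401 — 11 statements merged into one kernel-verified Lean document; each statement's English description precedes it below -/
import Mathlib

section
/- For a weighted digraph G with Laplacian L = D − A: the vector 1 = (1,…,1)ᵀ always satisfies L·1 = 0, and zero is a simple eigenvalue of L (i.e., zero is a root of multiplicity one of the characteristic polynomial of L) if and only if G has a globally reachable node. -/
/-- Node `j` is reachable from `i` in the weighted digraph with adjacency matrix `A`
(arc from `i` to `j` iff `0 < A i j`) if `i = j` or there is a directed path. -/
def reaches {n : ℕ} (A : Matrix (Fin n) (Fin n) ℝ) : Fin n → Fin n → Prop :=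
  Relation.ReflTransGen (fun i j => 0 < A i j)

/-- The Laplacian `L = D - A` of the weighted digraph, where `D` is the diagonal
matrix of row sums of `A`. -/
def lap {n : ℕ} (A : Matrix (Fin n) (Fin n) ℝ) : Matrix (Fin n) (Fin n) ℝ :=
  Matrix.diagonal (fun i => ∑ j, A i j) - A

open Matrix Polynomial Module

section Helpers

variable {n : ℕ} (A : Matrix (Fin n) (Fin n) ℝ)

lemma lap_mulVec (x : Fin n → ℝ) (i : Fin n) :
    (lap A).mulVec x i = ∑ j, A i j * (x i - x j) := by
  have h : (lap A).mulVec x i = (∑ j, A i j) * x i - ∑ j, A i j * x j := by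
    rw [lap, Matrix.sub_mulVec, Pi.sub_apply, Matrix.mulVec_diagonal]
    simp [Matrix.mulVec, dotProduct]
  rw [h, Finset.sum_mul, ← Finset.sum_sub_distrib]
  simp [mul_sub]

lemma lap_mulVec_one : (lap A).mulVec (fun _ => (1:ℝ)) = 0 := by
  funext i
  rw [lap_mulVec]
  simp

lemma lap_maxpt_nonneg (hA : ∀ i j, 0 ≤ A i j) {x : Fin n → ℝ} {i : Fin n}
    (hmax : ∀ k, x k ≤ x i) : 0 ≤ (lap A).mulVec x i := by
  rw [lap_mulVec]
  exact Finset.sum_nonneg fun j _ => mul_nonneg (hA i j) (sub_nonneg.mpr (hmax j))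

lemma lap_maxpt_eq (hA : ∀ i j, 0 ≤ A i j) {x : Fin n → ℝ} {i : Fin n}
    (hmax : ∀ k, x k ≤ x i) (h0 : (lap A).mulVec x i = 0) {j : Fin n}
    (hij : 0 < A i j) : x j = x i := by
  rw [lap_mulVec] at h0
  have hterm := (Finset.sum_eq_zero_iff_of_nonneg
    (fun j _ => mul_nonneg (hA i j) (sub_nonneg.mpr (hmax j)))).mp h0 j (Finset.mem_univ j)
  rcases mul_eq_zero.mp hterm with h | h
  · exact absurd h (ne_of_gt hij)
  · linarith

lemma lap_reach_max (hA : ∀ i j, 0 ≤ A i j) {x : Fin n → ℝ}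
    (hx : (lap A).mulVec x = 0) {i g : Fin n} (hig : reaches A i g)
    (hmax : ∀ k, x k ≤ x i) : x g = x i := by
  induction hig with
  | refl => rfl
  | @tail b c hab hbc ih =>
    have hmaxb : ∀ k, x k ≤ x b := fun k => (ih) ▸ hmax k
    have hb : (lap A).mulVec x b = 0 := by rw [hx]; rfl
    rw [← ih]
    exact lap_maxpt_eq A hA hmaxb hb hbc

lemma lap_ker_const (hA : ∀ i j, 0 ≤ A i j) {g : Fin n} (hg : ∀ i, reaches A i g)
    {x : Fin n → ℝ} (hx : (lap A).mulVec x = 0) : ∀ k, x k = x g := by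
  have hne : (Finset.univ : Finset (Fin n)).Nonempty := ⟨g, Finset.mem_univ g⟩
  obtain ⟨i, -, hi⟩ := Finset.exists_max_image Finset.univ x hne
  obtain ⟨i', -, hi'⟩ := Finset.exists_min_image Finset.univ x hne
  have hmax : ∀ k, x k ≤ x i := fun k => hi k (Finset.mem_univ k)
  have hmin : ∀ k, x i' ≤ x k := fun k => hi' k (Finset.mem_univ k)
  have h1 : x g = x i := lap_reach_max A hA hx (hg i) hmax
  have hx' : (lap A).mulVec (-x) = 0 := by
    rw [Matrix.mulVec_neg, hx, neg_zero]
  have h2 : (-x) g = (-x) i' :=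
    lap_reach_max A hA hx' (hg i') (fun k => neg_le_neg (hmin k))
  intro k
  have hk1 : x k ≤ x i := hmax k
  have hk2 : x i' ≤ x k := hmin k
  have h2' : x g = x i' := by simpa [neg_inj] using h2
  linarith

lemma lap_ker_sq (hA : ∀ i j, 0 ≤ A i j) {g : Fin n} (hg : ∀ i, reaches A i g)
    {x : Fin n → ℝ} (hx : (lap A).mulVec ((lap A).mulVec x) = 0) :
    (lap A).mulVec x = 0 := by
  set y := (lap A).mulVec x with hy
  have hyc : ∀ k, y k = y g := lap_ker_const A hA hg hx
  have hne : (Finset.univ : Finset (Fin n)).Nonempty := ⟨g, Finset.mem_univ g⟩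
  obtain ⟨i, -, hi⟩ := Finset.exists_max_image Finset.univ x hne
  obtain ⟨i', -, hi'⟩ := Finset.exists_min_image Finset.univ x hne
  have h1 : 0 ≤ y i := lap_maxpt_nonneg A hA (fun k => hi k (Finset.mem_univ k))
  have h2 : 0 ≤ (lap A).mulVec (-x) i' := by
    apply lap_maxpt_nonneg A hA
    intro k
    simp only [Pi.neg_apply, neg_le_neg_iff]
    exact hi' k (Finset.mem_univ k)
  have h2' : (lap A).mulVec (-x) i' = - y i' := by
    rw [Matrix.mulVec_neg]; rfl
  have hgy : y g = 0 := by
    have e1 := hyc i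
    have e2 := hyc i'
    rw [h2'] at h2
    linarith
  funext k
  rw [hyc k, hgy]
  rfl

lemma lap_charpoly_eq : (lap A).charpoly = (Matrix.mulVecLin (lap A)).charpoly := by
  rw [← LinearMap.charpoly_toMatrix (Matrix.mulVecLin (lap A)) (Pi.basisFun ℝ (Fin n))]
  congr 1
  rw [LinearMap.toMatrix_eq_toMatrix', ← Matrix.toLin'_apply']
  exact (LinearMap.toMatrix'_toLin' (lap A)).symm

lemma lap_rootMult :
    (lap A).charpoly.rootMultiplicity 0
      = finrank ℝ (Module.End.maxGenEigenspace (Matrix.mulVecLin (lap A)) 0) := by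
  rw [Polynomial.rootMultiplicity_eq_natTrailingDegree', lap_charpoly_eq,
    ← LinearMap.finrank_maxGenEigenspace_zero_eq]

lemma lap_row_sum (i : Fin n) : ∑ j, lap A i j = 0 := by
  have : ∑ j, Matrix.diagonal (fun i => ∑ j, A i j) i j = ∑ j, A i j := by
    simp [Matrix.diagonal]
  simp [lap, Matrix.sub_apply, Finset.sum_sub_distrib, this]

lemma sum_subtype_eq {P : Fin n → Prop} [DecidablePred P] (f : Fin n → ℝ)
    (hf : ∀ j, ¬ P j → f j = 0) : ∑ j, f j = ∑ j : {j // P j}, f j.1 := by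
  rw [← Finset.sum_filter_add_sum_filter_not Finset.univ P f]
  rw [Finset.sum_eq_zero (fun j hj => hf j (Finset.mem_filter.mp hj).2), add_zero]
  exact Finset.sum_subtype _ (fun x => by simp) f

lemma exists_left_ker (hA : ∀ i j, 0 ≤ A i j) (P : Fin n → Prop)
    (hcl : ∀ i j, P i → 0 < A i j → P j) (a : Fin n) (ha : P a) :
    ∃ π : Fin n → ℝ, π ≠ 0 ∧ (∀ j, ¬ P j → π j = 0) ∧ ((lap A)ᵀ).mulVec π = 0 := by
  classical
  have hzero : ∀ i j, P i → ¬ P j → A i j = 0 := by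
    intro i j hi hj
    have h := fun h' => hj (hcl i j hi h')
    have := hA i j
    rcases lt_or_eq_of_le this with h' | h'
    · exact absurd h' h
    · exact h'.symm
  have hlapzero : ∀ i j, P i → ¬ P j → lap A i j = 0 := by
    intro i j hi hj
    have hij : i ≠ j := fun h => hj (h ▸ hi)
    simp [lap, Matrix.sub_apply, Matrix.diagonal_apply_ne _ hij, hzero i j hi hj]
  let M : Matrix {j // P j} {j // P j} ℝ := fun i j => lap A i j
  haveI : Nonempty {j // P j} := ⟨⟨a, ha⟩⟩
  have hM1 : M.mulVec (fun _ => (1:ℝ)) = 0 := by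
    funext i
    simp only [Matrix.mulVec, dotProduct, mul_one, M, Pi.zero_apply]
    rw [← sum_subtype_eq (P := P) (fun j => lap A i.1 j)
      (fun j hj => hlapzero i.1 j i.2 hj)]
    exact lap_row_sum A i.1
  have hdet : M.det = 0 := by
    rw [← Matrix.exists_mulVec_eq_zero_iff]
    refine ⟨fun _ => 1, ?_, hM1⟩
    intro h
    have := congrFun h (Classical.arbitrary _)
    norm_num at this
  have hdetT : Mᵀ.det = 0 := by rw [Matrix.det_transpose]; exact hdet
  obtain ⟨w, hw0, hw⟩ := (Matrix.exists_mulVec_eq_zero_iff).mpr hdetT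
  refine ⟨fun j => if h : P j then w ⟨j, h⟩ else 0, ?_, ?_, ?_⟩
  · obtain ⟨c, hc⟩ := Function.ne_iff.mp hw0
    intro h
    have := congrFun h c.1
    simp only [dif_pos c.2, Pi.zero_apply] at this
    exact hc (by simpa using this)
  · intro j hj
    simp [dif_neg hj]
  · funext j
    have hsum : ∀ j : Fin n,
        ((lap A)ᵀ).mulVec (fun i => if h : P i then w ⟨i, h⟩ else 0) j
          = ∑ i : {i // P i}, lap A i.1 j * w i := by
      intro j
      simp only [Matrix.mulVec, dotProduct, Matrix.transpose_apply]
      rw [sum_subtype_eq (P := P) (fun i => lap A i j * (if h : P i then w ⟨i, h⟩ else 0))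
        (fun i hi => by simp [dif_neg hi])]
      apply Finset.sum_congr rfl
      intro i _
      rw [dif_pos i.2]
    rw [hsum j]
    by_cases hj : P j
    · have := congrFun hw ⟨j, hj⟩
      simpa [Matrix.mulVec, dotProduct, Matrix.transpose_apply, M, mul_comm, Matrix.transpose, Matrix.of_apply] using this
    · simp only [Pi.zero_apply]
      exact Finset.sum_eq_zero fun i _ => by
        rw [hlapzero i.1 j i.2 hj, zero_mul]

lemma exists_disjoint_closed (hno : ¬ ∃ g, ∀ i, reaches A i g) (hn : 0 < n) :
    ∃ (P Q : Fin n → Prop) (a b : Fin n), P a ∧ Q b ∧ (∀ j, ¬ (P j ∧ Q j)) ∧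
      (∀ i j, P i → 0 < A i j → P j) ∧ (∀ i j, Q i → 0 < A i j → Q j) := by
  classical
  have hne : (Finset.univ : Finset (Fin n)).Nonempty := by
    rw [Finset.univ_nonempty_iff]
    exact Fin.pos_iff_nonempty.mp hn
  obtain ⟨i0, -, hmin⟩ := Finset.exists_min_image Finset.univ
    (fun i => (Finset.univ.filter (fun j => reaches A i j)).card) hne
  have hback : ∀ j, reaches A i0 j → reaches A j i0 := by
    intro j hj
    have hsub : Finset.univ.filter (fun u => reaches A j u)
        ⊆ Finset.univ.filter (fun u => reaches A i0 u) := by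
      intro u hu
      simp only [Finset.mem_filter, Finset.mem_univ, true_and] at *
      exact hj.trans hu
    have heq := Finset.eq_of_subset_of_card_le hsub (hmin j (Finset.mem_univ j))
    have hi0mem : i0 ∈ Finset.univ.filter (fun u => reaches A j u) := by
      rw [heq]
      exact Finset.mem_filter.mpr ⟨Finset.mem_univ _, Relation.ReflTransGen.refl⟩
    simpa using hi0mem
  have hk : ∃ k, ¬ reaches A k i0 := by
    by_contra h
    push_neg at h
    exact hno ⟨i0, h⟩
  obtain ⟨k, hk⟩ := hk
  refine ⟨fun j => reaches A i0 j, fun j => reaches A k j, i0, k,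
    Relation.ReflTransGen.refl, Relation.ReflTransGen.refl, ?_, ?_, ?_⟩
  · rintro j ⟨h1, h2⟩
    exact hk (h2.trans (hback j h1))
  · intro i j hi hij
    exact hi.tail hij
  · intro i j hi hij
    exact hi.tail hij

lemma two_le_finrank_ker (hA : ∀ i j, 0 ≤ A i j)
    (hno : ¬ ∃ g, ∀ i, reaches A i g) (hn : 0 < n) :
    2 ≤ finrank ℝ (LinearMap.ker (Matrix.mulVecLin (lap A))) := by
  obtain ⟨P, Q, a, b, ha, hb, hdisj, hP, hQ⟩ := exists_disjoint_closed A hno hn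
  obtain ⟨π1, h10, h1s, h1k⟩ := exists_left_ker A hA P hP a ha
  obtain ⟨π2, h20, h2s, h2k⟩ := exists_left_ker A hA Q hQ b hb
  have hker1 : π1 ∈ LinearMap.ker (Matrix.mulVecLin ((lap A)ᵀ)) := by
    rw [LinearMap.mem_ker, Matrix.mulVecLin_apply]; exact h1k
  have hker2 : π2 ∈ LinearMap.ker (Matrix.mulVecLin ((lap A)ᵀ)) := by
    rw [LinearMap.mem_ker, Matrix.mulVecLin_apply]; exact h2k
  have hli : LinearIndependent ℝ ![π1, π2] := by
    rw [LinearIndependent.pair_iff]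
    intro s t hst
    obtain ⟨c, hc⟩ := Function.ne_iff.mp h10
    obtain ⟨d, hd⟩ := Function.ne_iff.mp h20
    have hPc : P c := by
      by_contra h
      exact hc (by simpa using h1s c h)
    have hQd : Q d := by
      by_contra h
      exact hd (by simpa using h2s d h)
    have h2c : π2 c = 0 := h2s c (fun hQc => hdisj c ⟨hPc, hQc⟩)
    have h1d : π1 d = 0 := h1s d (fun hPd => hdisj d ⟨hPd, hQd⟩)
    have hc' : π1 c ≠ 0 := by simpa using hc
    have hd' : π2 d ≠ 0 := by simpa using hd
    constructor
    · have := congrFun hst c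
      simp only [Pi.add_apply, Pi.smul_apply, smul_eq_mul, h2c, mul_zero, add_zero,
        Pi.zero_apply] at this
      exact (mul_eq_zero.mp this).resolve_right hc'
    · have := congrFun hst d
      simp only [Pi.add_apply, Pi.smul_apply, smul_eq_mul, h1d, mul_zero, zero_add,
        Pi.zero_apply] at this
      exact (mul_eq_zero.mp this).resolve_right hd'
  have h2T : 2 ≤ finrank ℝ (LinearMap.ker (Matrix.mulVecLin ((lap A)ᵀ))) := by
    let v : Fin 2 → LinearMap.ker (Matrix.mulVecLin ((lap A)ᵀ)) :=
      ![⟨π1, hker1⟩, ⟨π2, hker2⟩]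
    have hcomp : (LinearMap.ker (Matrix.mulVecLin ((lap A)ᵀ))).subtype ∘ v = ![π1, π2] := by
      funext i
      fin_cases i <;> rfl
    have hv : LinearIndependent ℝ v :=
      LinearIndependent.of_comp (LinearMap.ker (Matrix.mulVecLin ((lap A)ᵀ))).subtype
        (by rw [hcomp]; exact hli)
    simpa using hv.fintype_card_le_finrank
  have e1 := LinearMap.finrank_range_add_finrank_ker (Matrix.mulVecLin (lap A))
  have e2 := LinearMap.finrank_range_add_finrank_ker (Matrix.mulVecLin ((lap A)ᵀ))
  rw [Module.finrank_fin_fun] at e1 e2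
  have hr : ((lap A)ᵀ).rank = (lap A).rank := Matrix.rank_transpose _
  unfold Matrix.rank at hr
  omega

lemma maxgen_eq_span (hA : ∀ i j, 0 ≤ A i j) {g : Fin n} (hg : ∀ i, reaches A i g) :
    Module.End.maxGenEigenspace (Matrix.mulVecLin (lap A)) 0
      = Submodule.span ℝ {fun _ => (1:ℝ)} := by
  have hker : LinearMap.ker (Matrix.mulVecLin (lap A))
      = Submodule.span ℝ {fun _ => (1:ℝ)} := by
    apply le_antisymm
    · intro x hx
      rw [LinearMap.mem_ker, Matrix.mulVecLin_apply] at hx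
      have hc := lap_ker_const A hA hg hx
      have hx' : x = x g • (fun _ => (1:ℝ)) := funext fun k => by
        simp [hc k]
      rw [hx']
      exact Submodule.smul_mem _ _ (Submodule.mem_span_singleton_self _)
    · rw [Submodule.span_le, Set.singleton_subset_iff]
      rw [SetLike.mem_coe, LinearMap.mem_ker, Matrix.mulVecLin_apply]
      exact lap_mulVec_one A
  have key : ∀ m (z : Fin n → ℝ), ((Matrix.mulVecLin (lap A)) ^ (m+1)) z = 0 →
      (lap A).mulVec z = 0 := by
    intro m
    induction m with
    | zero =>
      intro z hz
      simpa [Matrix.mulVecLin_apply] using hz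
    | succ m ih =>
      intro z hz
      rw [pow_succ, Module.End.mul_apply] at hz
      have h2 := ih _ hz
      rw [Matrix.mulVecLin_apply] at h2
      exact lap_ker_sq A hA hg h2
  ext x
  rw [Module.End.mem_maxGenEigenspace]
  simp only [zero_smul, sub_zero]
  constructor
  · rintro ⟨k, hk⟩
    cases k with
    | zero =>
      simp only [pow_zero, Module.End.one_apply] at hk
      rw [hk]
      exact zero_mem _
    | succ m =>
      have hz := key m x hk
      rw [← hker, LinearMap.mem_ker, Matrix.mulVecLin_apply]
      exact hz
  · intro hx
    refine ⟨1, ?_⟩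
    rw [pow_one, Matrix.mulVecLin_apply]
    rw [← hker] at hx
    rw [LinearMap.mem_ker, Matrix.mulVecLin_apply] at hx
    exact hx

end Helpers

/-- For a weighted digraph `G` with Laplacian `L = D − A`: the all-ones vector
satisfies `L·1 = 0`, and zero is a root of multiplicity one of the characteristic
polynomial of `L` if and only if `G` has a globally reachable node. -/
theorem laplacian_ones_and_zero_simple_iff_globally_reachable
    {n : ℕ} (A : Matrix (Fin n) (Fin n) ℝ)
    (hA : ∀ i j, 0 ≤ A i j) (hdiag : ∀ i, A i i = 0) :
    (lap A).mulVec (fun _ => 1) = 0 ∧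
      ((lap A).charpoly.rootMultiplicity 0 = 1 ↔
        ∃ g : Fin n, ∀ i : Fin n, reaches A i g) := by
  refine ⟨lap_mulVec_one A, ?_⟩
  rw [lap_rootMult A]
  constructor
  · intro h1
    by_contra hno
    rcases Nat.eq_zero_or_pos n with hn | hn
    · have hle : finrank ℝ (Module.End.maxGenEigenspace (Matrix.mulVecLin (lap A)) 0)
          ≤ finrank ℝ (Fin n → ℝ) := Submodule.finrank_le _
      rw [Module.finrank_fin_fun] at hle
      omega
    · have h2 := two_le_finrank_ker A hA hno hn
      have hle : LinearMap.ker (Matrix.mulVecLin (lap A))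
          ≤ Module.End.maxGenEigenspace (Matrix.mulVecLin (lap A)) 0 := by
        intro x hx
        rw [Module.End.mem_maxGenEigenspace]
        refine ⟨1, ?_⟩
        simp only [zero_smul, sub_zero, pow_one]
        exact hx
      have := Submodule.finrank_mono hle
      omega
  · rintro ⟨g, hg⟩
    rw [maxgen_eq_span A hA hg]
    rw [finrank_span_singleton]
    intro h
    have := congrFun h g
    norm_num at this
end

section
/- If the weighted digraph G is strongly connected and at least one diagonal entry b_i of the leader adjacency matrix B is positive, then H = L + B is positive stable, i.e., every eigenvalue of H has positive real part. -/
/-- If the weighted digraph `G` is strongly connected and at least one diagonal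
entry `b i` of the leader adjacency matrix `B = diagonal b` is positive, then
`H = L + B` is positive stable: every eigenvalue has positive real part. -/
theorem strongly_connected_leader_positive_stable
    {n : ℕ} (A : Matrix (Fin n) (Fin n) ℝ)
    (hA : ∀ i j, 0 ≤ A i j) (hdiag : ∀ i, A i i = 0)
    (hconn : ∀ i j : Fin n, reaches A i j)
    (b : Fin n → ℝ) (hb : ∀ i, 0 ≤ b i) (hpos : ∃ i, 0 < b i) :
    ∀ z ∈ spectrum ℂ ((lap A + Matrix.diagonal b).map (fun x : ℝ => (x : ℂ))),
      0 < z.re := by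
  intro z hz
  by_contra hzre
  push_neg at hzre
  set M := (lap A + Matrix.diagonal b).map (fun x : ℝ => (x : ℂ)) with hM
  -- get an eigenvector
  have hev : Module.End.HasEigenvalue (Matrix.toLin' M) z := by
    rw [Module.End.hasEigenvalue_iff_mem_spectrum]
    rwa [show Matrix.toLin' M = Matrix.toLinAlgEquiv' M from rfl,
      AlgEquiv.spectrum_eq Matrix.toLinAlgEquiv' M]
  obtain ⟨v, hv⟩ := hev.exists_hasEigenvector
  have hv0 : v ≠ 0 := hv.right
  have hveq : M.mulVec v = z • v := by
    have := hv.apply_eq_smul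
    rwa [Matrix.toLin'_apply] at this
  -- the eigen-equation per row
  have key : ∀ p, ((∑ j, A p j : ℝ) + (b p : ℝ) - z) * v p = ∑ j, (A p j : ℂ) * v j := by
    intro p
    have h1 := congrFun hveq p
    have hMpj : ∀ j, M p j = (if p = j then ((∑ k, A p k : ℝ) + b p : ℂ) else 0) - (A p j : ℂ) := by
      intro j
      simp only [hM, Matrix.map_apply, Matrix.add_apply, lap, Matrix.sub_apply,
        Matrix.diagonal_apply]
      by_cases h : p = j
      · subst h; simp [hdiag p]
      · push_cast [h]; ring
    have : (M.mulVec v) p = ((∑ j, A p j : ℝ) + (b p : ℝ)) * v p - ∑ j, (A p j : ℂ) * v j := by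
      simp only [Matrix.mulVec, dotProduct]
      rw [Finset.sum_congr rfl (fun j _ => by rw [hMpj j])]
      simp [sub_mul, Finset.sum_sub_distrib, Finset.sum_ite_eq, Complex.ofReal_sum]
    rw [this] at h1
    rw [Pi.smul_apply, smul_eq_mul] at h1
    linear_combination h1
  -- max modulus
  obtain ⟨k, hk⟩ := hpos
  have : Nonempty (Fin n) := ⟨k⟩
  obtain ⟨i0, -, hi0⟩ := Finset.exists_max_image Finset.univ (fun i => ‖v i‖)
    ⟨k, Finset.mem_univ k⟩
  set m := ‖v i0‖ with hm
  have hmax : ∀ j, ‖v j‖ ≤ m := fun j => hi0 j (Finset.mem_univ j)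
  have hmpos : 0 < m := by
    rcases eq_or_lt_of_le (norm_nonneg (v i0)) with h | h
    · exfalso; apply hv0; funext j
      have hj := (hmax j).trans (le_of_eq (hm.trans h.symm))
      exact norm_eq_zero.mp (le_antisymm hj (norm_nonneg _))
    · exact h
  -- the key local lemma
  have local_lem : ∀ p, ‖v p‖ = m →
      b p = 0 ∧ ∀ j, 0 < A p j → ‖v j‖ = m := by
    intro p hp
    have hE := key p
    set d := ∑ j, A p j with hd
    have hd0 : 0 ≤ d := Finset.sum_nonneg fun j _ => hA p j
    have hlhs : (d + b p) * m ≤ ‖((d : ℝ) + (b p : ℝ) - z) * v p‖ := by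
      rw [norm_mul, hp]
      apply mul_le_mul_of_nonneg_right _ (le_of_lt hmpos)
      calc d + b p ≤ d + b p - z.re := by linarith
        _ = (((d : ℝ) + (b p : ℝ) - z)).re := by simp
        _ ≤ ‖(d : ℝ) + (b p : ℝ) - z‖ := Complex.re_le_norm _
    have hrhs : ‖∑ j, (A p j : ℂ) * v j‖ ≤ ∑ j, A p j * ‖v j‖ := by
      refine le_trans (norm_sum_le _ _) (le_of_eq ?_)
      apply Finset.sum_congr rfl
      intro j _
      rw [norm_mul, Complex.norm_real, Real.norm_eq_abs, abs_of_nonneg (hA p j)]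
    have hsum_le : ∑ j, A p j * ‖v j‖ ≤ d * m := by
      rw [hd, Finset.sum_mul]
      exact Finset.sum_le_sum fun j _ => mul_le_mul_of_nonneg_left (hmax j) (hA p j)
    have hchain : (d + b p) * m ≤ d * m := by
      calc (d + b p) * m ≤ ‖((d : ℝ) + (b p : ℝ) - z) * v p‖ := hlhs
        _ = ‖∑ j, (A p j : ℂ) * v j‖ := by rw [hE]
        _ ≤ ∑ j, A p j * ‖v j‖ := hrhs
        _ ≤ d * m := hsum_le
    have hbp : b p = 0 := by
      nlinarith [hb p, hmpos]
    refine ⟨hbp, ?_⟩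
    intro j hj
    by_contra hne
    have hlt : ‖v j‖ < m := lt_of_le_of_ne (hmax j) hne
    have hstrict : ∑ l, A p l * ‖v l‖ < d * m := by
      rw [hd, Finset.sum_mul]
      apply Finset.sum_lt_sum
      · exact fun l _ => mul_le_mul_of_nonneg_left (hmax l) (hA p l)
      · exact ⟨j, Finset.mem_univ j, by nlinarith⟩
    have : (d + b p) * m < d * m := by
      calc (d + b p) * m ≤ ‖((d : ℝ) + (b p : ℝ) - z) * v p‖ := hlhs
        _ = ‖∑ l, (A p l : ℂ) * v l‖ := by rw [hE]
        _ ≤ ∑ l, A p l * ‖v l‖ := hrhs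
        _ < d * m := hstrict
    nlinarith [hb p]
  -- propagate along reachability
  have hreach : ∀ j, reaches A i0 j → ‖v j‖ = m := by
    intro j hj
    induction hj with
    | refl => rfl
    | tail _ hbc ih => exact ((local_lem _ ih).2 _ hbc)
  have hvk : ‖v k‖ = m := hreach k (hconn i0 k)
  have := (local_lem k hvk).1
  linarith
end

section
/- The matrix H = L + B is positive stable if and only if node 0 is globally reachable in the augmented digraph Ḡ, i.e., if and only if for every node i ∈ {1,…,n}, either b_i > 0 or there is a directed path in G from i to some node j with b_j > 0. -/
/-- Node `0` (the leader) is globally reachable in the augmented digraph `Ḡ`: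
from every node `i`, either `b i > 0` or there is a directed path in `G` from `i`
to some node `j` with `b j > 0`. -/
def leaderGloballyReachable {n : ℕ} (A : Matrix (Fin n) (Fin n) ℝ)
    (b : Fin n → ℝ) : Prop :=
  ∀ i : Fin n, 0 < b i ∨ ∃ j : Fin n, reaches A i j ∧ 0 < b j

private lemma Hmat_apply {n : ℕ} (A : Matrix (Fin n) (Fin n) ℝ) (b : Fin n → ℝ)
    (i j : Fin n) :
    (lap A + Matrix.diagonal b) i j
      = (if i = j then (∑ k, A i k) + b i else 0) - A i j := by
  simp only [lap, Matrix.add_apply, Matrix.sub_apply, Matrix.diagonal_apply]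
  split <;> ring

private lemma Hmat_rowsum {n : ℕ} (A : Matrix (Fin n) (Fin n) ℝ) (b : Fin n → ℝ)
    (i : Fin n) :
    ∑ j, (lap A + Matrix.diagonal b) i j = b i := by
  simp only [Hmat_apply]
  rw [Finset.sum_sub_distrib, Finset.sum_ite_eq]
  simp

/-- Forward direction: if the leader is not reachable from `i`, then `H` is singular. -/
private lemma det_Hmat_eq_zero {n : ℕ} (A : Matrix (Fin n) (Fin n) ℝ)
    (hA : ∀ i j, 0 ≤ A i j) (b : Fin n → ℝ) (hb : ∀ i, 0 ≤ b i) (i : Fin n)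
    (hreach : ∀ j, reaches A i j → ¬ 0 < b j) :
    (lap A + Matrix.diagonal b).det = 0 := by
  classical
  set M := lap A + Matrix.diagonal b with hM
  set p : Fin n → Prop := reaches A i with hp
  have hS0 : ∀ k, p k → b k = 0 := fun k hk =>
    le_antisymm (not_lt.mp (hreach k hk)) (hb k)
  have hS1 : ∀ k, p k → ∀ j, ¬ p j → A k j = 0 := by
    intro k hk j hj
    by_contra h
    exact hj (hk.tail (lt_of_le_of_ne (hA k j) (Ne.symm h)))
  set B11 : Matrix {x // p x} {x // p x} ℝ :=
    M.submatrix Subtype.val Subtype.val with hB11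
  have hne : ∀ (k : Fin n), p k → ∀ j, ¬ p j → M k j = 0 := by
    intro k hk j hj
    have hkj : k ≠ j := fun h => hj (h ▸ hk)
    rw [hM, Hmat_apply, if_neg hkj, hS1 k hk j hj]
    ring
  have hdetB11 : B11.det = 0 := by
    haveI : Nonempty {x // p x} := ⟨⟨i, Relation.ReflTransGen.refl⟩⟩
    rw [← Matrix.exists_mulVec_eq_zero_iff]
    refine ⟨fun _ => 1, ?_, ?_⟩
    · intro h
      have := congrFun h (Classical.arbitrary _)
      norm_num at this
    · funext k
      have hsplit := Fintype.sum_subtype_add_sum_subtype p (fun j => M (↑k) j)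
      have h2 : ∑ j : {x // ¬ p x}, M (↑k) ↑j = 0 :=
        Finset.sum_eq_zero fun j _ => hne k k.2 j j.2
      have h1 : ∑ j : {x // p x}, M (↑k) ↑j = 0 := by
        have := Hmat_rowsum A b (↑k)
        rw [← hM] at this
        rw [this, hS0 k k.2] at hsplit
        linarith [hsplit, h2]
      simpa [Matrix.mulVec, dotProduct, hB11] using h1
  set e := Equiv.sumCompl p with he
  have hsub : M.submatrix e e
      = Matrix.fromBlocks B11 0 (M.submatrix (Subtype.val) (Subtype.val))
          (M.submatrix Subtype.val Subtype.val) := by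
    ext x y
    rcases x with (⟨k, hk⟩ | ⟨k, hk⟩) <;> rcases y with (⟨j, hj⟩ | ⟨j, hj⟩) <;>
      simp [he, Matrix.submatrix_apply, hB11]
    exact hne k hk j hj
  have := Matrix.det_submatrix_equiv_self e M
  rw [hsub, Matrix.det_fromBlocks_zero₁₂, hdetB11, zero_mul] at this
  exact this.symm

/-- The matrix `H = L + B` is positive stable (all eigenvalues have positive real
part) if and only if node `0` is globally reachable in the augmented digraph `Ḡ`. -/
theorem H_positive_stable_iff_leader_globally_reachable
    {n : ℕ} (A : Matrix (Fin n) (Fin n) ℝ)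
    (hA : ∀ i j, 0 ≤ A i j) (hdiag : ∀ i, A i i = 0)
    (b : Fin n → ℝ) (hb : ∀ i, 0 ≤ b i) :
    (∀ z ∈ spectrum ℂ ((lap A + Matrix.diagonal b).map (fun x : ℝ => (x : ℂ))),
        0 < z.re) ↔
      leaderGloballyReachable A b := by
  classical
  set M := lap A + Matrix.diagonal b with hM
  set Mc := M.map (fun x : ℝ => (x : ℂ)) with hMc
  have hdetMc : Mc.det = (M.det : ℂ) := by
    rw [hMc, show M.map (fun x : ℝ => (x : ℂ)) = Complex.ofRealHom.mapMatrix M from rfl,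
      ← RingHom.map_det]
    rfl
  constructor
  · -- positive stable → reachable
    intro hps
    by_contra hnot
    unfold leaderGloballyReachable at hnot
    push_neg at hnot
    obtain ⟨i, _, hreach⟩ := hnot
    have hdet : M.det = 0 := det_Hmat_eq_zero A hA b hb i (fun j hj => not_lt.mpr (hreach j hj))
    have h0 : (0 : ℂ) ∈ spectrum ℂ Mc := by
      rw [spectrum.mem_iff]
      intro hunit
      rw [map_zero, zero_sub, IsUnit.neg_iff, Matrix.isUnit_iff_isUnit_det, hdetMc, hdet] at hunit
      simp at hunit
    have := hps 0 h0
    simp at this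
  · -- reachable → positive stable
    intro hglob z hz
    by_contra hrepos
    push_neg at hrepos
    -- extract an eigenvector
    have hdet : ((algebraMap ℂ _ z) - Mc).det = 0 := by
      by_contra h
      exact (spectrum.mem_iff.mp hz) ((Matrix.isUnit_iff_isUnit_det _).mpr (Ne.isUnit h))
    obtain ⟨v, hv0, hveq⟩ := (Matrix.exists_mulVec_eq_zero_iff).mpr hdet
    have heig : Mc.mulVec v = z • v := by
      have h1 : (algebraMap ℂ (Matrix (Fin n) (Fin n) ℂ) z).mulVec v - Mc.mulVec v = 0 := by
        rw [← Matrix.sub_mulVec]; exact hveq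
      have h2 : (algebraMap ℂ (Matrix (Fin n) (Fin n) ℂ) z).mulVec v = z • v := by
        rw [Algebra.algebraMap_eq_smul_one, Matrix.smul_mulVec, Matrix.one_mulVec]
      rw [h2] at h1
      exact (sub_eq_zero.mp h1).symm
    -- row equations
    have hrow : ∀ k, ((((∑ j, A k j) + b k : ℝ) : ℂ) - z) * v k = ∑ j, ((A k j : ℝ) : ℂ) * v j := by
      intro k
      have h1 : (∑ j, ((M k j : ℝ) : ℂ) * v j) = z * v k := by
        have := congrFun heig k
        simpa [Matrix.mulVec, dotProduct, hMc, Matrix.map_apply] using this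
      have h4 : ∀ j ∈ Finset.univ, ((M k j : ℝ) : ℂ) * v j
          = (if k = j then ((((∑ t, A k t) + b k : ℝ)) : ℂ) * v j else 0)
            - ((A k j : ℝ) : ℂ) * v j := by
        intro j _
        rw [hM, Hmat_apply]
        split <;> push_cast <;> ring
      rw [Finset.sum_congr rfl h4, Finset.sum_sub_distrib, Finset.sum_ite_eq,
        if_pos (Finset.mem_univ k)] at h1
      linear_combination h1
    -- pick a max-modulus index
    obtain ⟨k0, hk0⟩ := Function.ne_iff.mp hv0
    obtain ⟨i, -, hmaxmem⟩ := Finset.exists_max_image Finset.univ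
      (fun k => ‖v k‖) ⟨k0, Finset.mem_univ k0⟩
    have hmax : ∀ k, ‖v k‖ ≤ ‖v i‖ :=
      fun k => hmaxmem k (Finset.mem_univ k)
    set Mv := ‖v i‖ with hMv
    have hMvpos : 0 < Mv :=
      lt_of_lt_of_le (norm_pos_iff.mpr hk0) (hmax k0)
    -- Gershgorin-type bound at any max-modulus index
    have habs : ∀ k, ‖v k‖ = Mv →
        ‖(((∑ j, A k j) + b k : ℝ) : ℂ) - z‖ ≤ ∑ j, A k j := by
      intro k hk
      have h1 : ‖(((∑ j, A k j) + b k : ℝ) : ℂ) - z‖ * Mv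
          ≤ (∑ j, A k j) * Mv := by
        calc ‖(((∑ j, A k j) + b k : ℝ) : ℂ) - z‖ * Mv
            = ‖((((∑ j, A k j) + b k : ℝ) : ℂ) - z) * v k‖ := by
              rw [norm_mul, hk]
          _ = ‖∑ j, ((A k j : ℝ) : ℂ) * v j‖ := by rw [hrow k]
          _ ≤ ∑ j, ‖((A k j : ℝ) : ℂ) * v j‖ :=
              norm_sum_le _ _
          _ ≤ ∑ j, A k j * Mv := by
              refine Finset.sum_le_sum fun j _ => ?_
              rw [norm_mul, Complex.norm_real, Real.norm_eq_abs, abs_of_nonneg (hA k j)]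
              exact mul_le_mul_of_nonneg_left (hmax j) (hA k j)
          _ = (∑ j, A k j) * Mv := by rw [Finset.sum_mul]
      exact le_of_mul_le_mul_right h1 hMvpos
    -- real-part bound
    have hbmax : ∀ k, ‖v k‖ = Mv → b k ≤ z.re := by
      intro k hk
      have h1 := habs k hk
      have h2 : ((((∑ j, A k j) + b k : ℝ) : ℂ) - z).re
          ≤ ‖(((∑ j, A k j) + b k : ℝ) : ℂ) - z‖ := Complex.re_le_norm _
      have h3 : (∑ j, A k j) + b k - z.re ≤ ∑ j, A k j := by
        simpa [Complex.sub_re, Complex.ofReal_re] using le_trans h2 h1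
      linarith
    have hzre : z.re = 0 := le_antisymm hrepos (le_trans (hb i) (hbmax i rfl))
    have hb0 : ∀ k, ‖v k‖ = Mv → b k = 0 :=
      fun k hk => le_antisymm (hzre ▸ hbmax k hk) (hb k)
    -- the eigenvalue is zero
    have hz0 : z = 0 := by
      have h1 := habs i rfl
      have h2 : ‖((∑ j, A i j : ℝ) : ℂ) - z‖ ≤ ∑ j, A i j := by
        simpa [hb0 i rfl] using h1
      have h3 : ‖((∑ j, A i j : ℝ) : ℂ) - z‖ ^ 2 ≤ (∑ j, A i j) ^ 2 :=
        pow_le_pow_left₀ (norm_nonneg _) h2 2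
      rw [Complex.sq_norm, Complex.normSq_apply, Complex.sub_re, Complex.sub_im,
        Complex.ofReal_re, Complex.ofReal_im, hzre] at h3
      have him : z.im = 0 := by nlinarith [h3]
      exact Complex.ext hzre him
    -- propagation of the maximum modulus along arcs
    have hprop : ∀ k, ‖v k‖ = Mv → ∀ j, 0 < A k j → v j = v k := by
      intro k hk j hAkj
      have hroweq : ∑ t, ((A k t : ℝ) : ℂ) * v t = ((∑ t, A k t : ℝ) : ℂ) * v k := by
        have h := hrow k
        rw [hz0, hb0 k hk] at h
        simpa using h.symm
      have hre : ∑ t, A k t * (v t).re = (∑ t, A k t) * (v k).re := by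
        have := congrArg Complex.re hroweq
        simpa [Complex.re_sum, Complex.re_ofReal_mul] using this
      have him : ∑ t, A k t * (v t).im = (∑ t, A k t) * (v k).im := by
        have := congrArg Complex.im hroweq
        simpa [Complex.im_sum, Complex.im_ofReal_mul] using this
      have hNk : (v k).re * (v k).re + (v k).im * (v k).im = Mv ^ 2 := by
        have h := Complex.sq_norm (v k)
        rw [hk, Complex.normSq_apply] at h
        linarith
      have hNle : ∀ t, (v t).re * (v t).re + (v t).im * (v t).im ≤ Mv ^ 2 := by
        intro t
        have h := pow_le_pow_left₀ (norm_nonneg (v t)) (hmax t) 2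
        rw [Complex.sq_norm, Complex.normSq_apply] at h
        exact h
      have hterm : ∀ t ∈ Finset.univ,
          0 ≤ A k t * (Mv ^ 2 - ((v k).re * (v t).re + (v k).im * (v t).im)) := by
        intro t _
        apply mul_nonneg (hA k t)
        have h2 := hNle t
        nlinarith [sq_nonneg ((v k).re * (v t).im - (v k).im * (v t).re), hNk]
      have hsumzero : ∑ t, A k t * (Mv ^ 2 - ((v k).re * (v t).re + (v k).im * (v t).im)) = 0 := by
        have hexp : ∑ t, A k t * (Mv ^ 2 - ((v k).re * (v t).re + (v k).im * (v t).im))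
            = (∑ t, A k t) * Mv ^ 2
              - ((v k).re * ∑ t, A k t * (v t).re + (v k).im * ∑ t, A k t * (v t).im) := by
          rw [Finset.mul_sum, Finset.mul_sum, ← Finset.sum_add_distrib, Finset.sum_mul,
            ← Finset.sum_sub_distrib]
          refine Finset.sum_congr rfl fun t _ => by ring
        rw [hexp, hre, him]
        linear_combination (-(∑ t, A k t)) * hNk
      have hall0 := (Finset.sum_eq_zero_iff_of_nonneg hterm).mp hsumzero
      have hj0 := hall0 j (Finset.mem_univ j)
      have hX : (v k).re * (v j).re + (v k).im * (v j).im = Mv ^ 2 := by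
        rcases mul_eq_zero.mp hj0 with h | h
        · exact absurd h (ne_of_gt hAkj)
        · linarith
      have hns : Complex.normSq (v j - v k) = 0 := by
        rw [Complex.normSq_apply, Complex.sub_re, Complex.sub_im]
        have h2 := hNle j
        nlinarith [hX, hNk]
      exact sub_eq_zero.mp (Complex.normSq_eq_zero.mp hns)
    -- every node reachable from i has the same (max-modulus) value
    have hallmax : ∀ j, reaches A i j → v j = v i := by
      intro j hj
      induction hj with
      | refl => rfl
      | tail hsteps hstep ih =>
        exact (hprop _ (by rw [ih]) _ hstep).trans ih
    rcases hglob i with hbi | ⟨j, hij, hbj⟩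
    · exact absurd (hb0 i rfl) (ne_of_gt hbi)
    · have hvj : ‖v j‖ = Mv := by rw [hallmax j hij]
      exact absurd (hb0 j hvj) (ne_of_gt hbj)
end

section
/- Let H ∈ ℝ^{n×n} and let P̄ ∈ ℝ^{n×n} be symmetric positive definite with P̄H + HᵀP̄ = I_n. Let μ̄ be the largest eigenvalue of P̄HHᵀP̄ and λ̄ the smallest eigenvalue of P̄. If k > μ̄/(2λ̄) + 1, then the 2n×2n block matrix Q = [[I_n, HᵀP̄],[P̄H, 2(k−1)P̄]] is symmetric positive definite. -/
open Matrix Pointwise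

/-- If every element of the real spectrum of a Hermitian real matrix `A` is at least `c`,
then `A - c • 1` is positive semidefinite. -/
lemma aux_sub_smul_posSemidef {m : ℕ} {A : Matrix (Fin m) (Fin m) ℝ}
    (hA : A.IsHermitian) (c : ℝ) (h : ∀ s ∈ spectrum ℝ A, c ≤ s) :
    (A - c • 1).PosSemidef := by
  have hH : (A - c • (1 : Matrix (Fin m) (Fin m) ℝ)).IsHermitian :=
    hA.sub (by simp [Matrix.IsHermitian])
  refine (Matrix.IsHermitian.posSemidef_iff_eigenvalues_nonneg hH).mpr fun i => show (0:ℝ) ≤ hH.eigenvalues i from ?_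
  have hmem : hH.eigenvalues i ∈ spectrum ℝ A - ({c} : Set ℝ) := by
    rw [spectrum.sub_singleton_eq, Algebra.algebraMap_eq_smul_one]
    exact hH.eigenvalues_mem_spectrum_real i
  obtain ⟨s, hs, t, ht, hst⟩ := Set.mem_sub.mp hmem
  rw [Set.mem_singleton_iff] at ht
  subst ht
  have := h s hs
  linarith [hst]

/-- If every element of the real spectrum of a Hermitian real matrix `A` is at most `c`,
then `c • 1 - A` is positive semidefinite. -/
lemma aux_smul_sub_posSemidef {m : ℕ} {A : Matrix (Fin m) (Fin m) ℝ}
    (hA : A.IsHermitian) (c : ℝ) (h : ∀ s ∈ spectrum ℝ A, s ≤ c) :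
    (c • 1 - A).PosSemidef := by
  have hH : ((c • 1 : Matrix (Fin m) (Fin m) ℝ) - A).IsHermitian :=
    (Matrix.IsHermitian.sub (by simp [Matrix.IsHermitian]) hA)
  refine (Matrix.IsHermitian.posSemidef_iff_eigenvalues_nonneg hH).mpr fun i => show (0:ℝ) ≤ hH.eigenvalues i from ?_
  have hmem : hH.eigenvalues i ∈ ({c} : Set ℝ) - spectrum ℝ A := by
    rw [spectrum.singleton_sub_eq, Algebra.algebraMap_eq_smul_one]
    exact hH.eigenvalues_mem_spectrum_real i
  obtain ⟨t, ht, s, hs, hst⟩ := Set.mem_sub.mp hmem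
  rw [Set.mem_singleton_iff] at ht
  subst ht
  have := h s hs
  linarith [hst]

/-- Elements of the spectrum of a positive definite real matrix are positive. -/
lemma aux_spectrum_pos {m : ℕ} {A : Matrix (Fin m) (Fin m) ℝ}
    (hA : A.PosDef) {s : ℝ} (hs : s ∈ spectrum ℝ A) : 0 < s := by
  by_contra hneg
  push_neg at hneg
  have h1 : ((-s) • (1 : Matrix (Fin m) (Fin m) ℝ)).PosSemidef := by
    rw [Matrix.smul_one_eq_diagonal]
    exact Matrix.PosSemidef.diagonal fun i => by simpa using hneg
  have h2 : (A - s • 1).PosDef := by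
    have := hA.add_posSemidef h1
    simpa [sub_eq_add_neg, neg_smul] using this
  have h3 : IsUnit (algebraMap ℝ (Matrix (Fin m) (Fin m) ℝ) s - A) := by
    rw [Algebra.algebraMap_eq_smul_one, show s • (1 : Matrix (Fin m) (Fin m) ℝ) - A
      = -(A - s • 1) from (neg_sub _ _).symm]
    exact h2.isUnit.neg
  exact (spectrum.mem_iff.mp hs) h3


/-- Elements of the spectrum of a positive semidefinite real matrix are nonnegative. -/
lemma aux_spectrum_nonneg {m : ℕ} {A : Matrix (Fin m) (Fin m) ℝ}
    (hA : A.PosSemidef) {s : ℝ} (hs : s ∈ spectrum ℝ A) : 0 ≤ s := by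
  by_contra hneg
  push_neg at hneg
  have h1 : ((-s) • (1 : Matrix (Fin m) (Fin m) ℝ)).PosDef := by
    rw [Matrix.smul_one_eq_diagonal]
    exact Matrix.PosDef.diagonal fun i => by simpa using hneg
  have h2 : (A - s • 1).PosDef := by
    have := Matrix.PosDef.posSemidef_add hA h1
    simpa [sub_eq_add_neg, neg_smul] using this
  have h3 : IsUnit (algebraMap ℝ (Matrix (Fin m) (Fin m) ℝ) s - A) := by
    rw [Algebra.algebraMap_eq_smul_one, show s • (1 : Matrix (Fin m) (Fin m) ℝ) - A
      = -(A - s • 1) from (neg_sub _ _).symm]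
    exact h2.isUnit.neg
  exact (spectrum.mem_iff.mp hs) h3

/-- Let `P̄` be symmetric positive definite with `P̄H + HᵀP̄ = I`, let `μ̄` be the
largest eigenvalue of `P̄HHᵀP̄` and `λ̄` the smallest eigenvalue of `P̄`.  If
`k > μ̄/(2λ̄) + 1`, then `Q = [[I, HᵀP̄],[P̄H, 2(k−1)P̄]]` is symmetric positive
definite. -/
theorem block_Q_posDef
    {n : ℕ} (H P : Matrix (Fin n) (Fin n) ℝ)
    (hP : P.PosDef) (hLyap : P * H + Hᵀ * P = 1)
    (μ lam k : ℝ)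
    (hμ : IsGreatest (spectrum ℝ (P * H * Hᵀ * P)) μ)
    (hlam : IsLeast (spectrum ℝ P) lam)
    (hk : μ / (2 * lam) + 1 < k) :
    (Matrix.fromBlocks 1 (Hᵀ * P) (P * H) ((2 * (k - 1)) • P)).IsSymm ∧
      (Matrix.fromBlocks 1 (Hᵀ * P) (P * H) ((2 * (k - 1)) • P)).PosDef := by
  have hPt : Pᵀ = P := by
    rw [← Matrix.conjTranspose_eq_transpose_of_trivial]; exact hP.1
  have hBH : (Hᵀ * P)ᴴ = P * H := by
    rw [conjTranspose_mul, Matrix.conjTranspose_eq_transpose_of_trivial,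
      Matrix.conjTranspose_eq_transpose_of_trivial, transpose_transpose, hPt]
  have hsymm : (Matrix.fromBlocks 1 (Hᵀ * P) (P * H) ((2 * (k - 1)) • P)).IsSymm := by
    rw [Matrix.IsSymm, fromBlocks_transpose, transpose_one, transpose_smul,
      transpose_mul, transpose_mul, transpose_transpose, hPt]
  have hQherm : (Matrix.fromBlocks 1 (Hᵀ * P) (P * H) ((2 * (k - 1)) • P)).IsHermitian := by
    rw [Matrix.IsHermitian, Matrix.conjTranspose_eq_transpose_of_trivial]; exact hsymm
  -- basic spectral facts
  have hlam0 : 0 < lam := aux_spectrum_pos hP hlam.1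
  have hMpsd : (P * H * Hᵀ * P).PosSemidef := by
    have h0 := Matrix.posSemidef_conjTranspose_mul_self (Hᵀ * P)
    rw [hBH, ← Matrix.mul_assoc] at h0
    exact h0
  have hμ0 : 0 ≤ μ := aux_spectrum_nonneg hMpsd hμ.1
  have hk1 : 0 < k - 1 := by
    have := div_nonneg hμ0 (by linarith : (0:ℝ) ≤ 2 * lam)
    linarith
  have hk' : μ < 2 * lam * (k - 1) := by
    have h2 : (0:ℝ) < 2 * lam := by linarith
    have := (div_lt_iff₀ h2).mp (by linarith : μ / (2 * lam) < k - 1)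
    linarith
  have hPlow : (P - lam • 1).PosSemidef :=
    aux_sub_smul_posSemidef hP.1 lam fun s hs => hlam.2 hs
  have hMup : ((μ • 1) - P * H * Hᵀ * P).PosSemidef :=
    aux_smul_sub_posSemidef hMpsd.1 μ fun s hs => hμ.2 hs
  -- the Schur complement is positive definite
  have hS : ((2 * (k - 1)) • P - P * H * (Hᵀ * P)).PosDef := by
    refine posDef_iff_dotProduct_mulVec.mpr ⟨?_, ?_⟩
    · refine Matrix.IsHermitian.sub (by simp [Matrix.IsHermitian, hPt, hP.1.eq]) ?_
      have h := hMpsd.1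
      rwa [Matrix.mul_assoc] at h
    · intro y hy
      have ht : 0 < star y ⬝ᵥ y := dotProduct_star_self_pos_iff.mpr hy
      have ht' : 0 < y ⬝ᵥ y := by simpa using ht
      have h1 : lam * (y ⬝ᵥ y) ≤ y ⬝ᵥ P *ᵥ y := by
        have h := hPlow.dotProduct_mulVec_nonneg y
        simp only [sub_mulVec, smul_mulVec, one_mulVec, dotProduct_sub,
          dotProduct_smul, smul_eq_mul, star_trivial] at h
        linarith
      have h2 : y ⬝ᵥ (P * H * Hᵀ * P) *ᵥ y ≤ μ * (y ⬝ᵥ y) := by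
        have h := hMup.dotProduct_mulVec_nonneg y
        simp only [sub_mulVec, smul_mulVec, one_mulVec, dotProduct_sub,
          dotProduct_smul, smul_eq_mul, star_trivial] at h
        linarith
      have hgoal : 0 < 2 * (k - 1) * (y ⬝ᵥ P *ᵥ y) - y ⬝ᵥ (P * H * Hᵀ * P) *ᵥ y := by
        nlinarith [mul_le_mul_of_nonneg_left h1 (by linarith : (0:ℝ) ≤ 2 * (k - 1)),
          mul_lt_mul_of_pos_right hk' ht']
      rw [sub_mulVec, smul_mulVec, dotProduct_sub, dotProduct_smul, ← Matrix.mul_assoc]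
      simpa [smul_eq_mul] using hgoal
  haveI : Invertible (1 : Matrix (Fin n) (Fin n) ℝ) := invertibleOne
  refine ⟨hsymm, posDef_iff_dotProduct_mulVec.mpr ⟨hQherm, fun x hx => ?_⟩⟩
  have key := schur_complement_eq₁₁ (A := (1 : Matrix (Fin n) (Fin n) ℝ))
    (Hᵀ * P) ((2 * (k - 1)) • P) (x ∘ Sum.inl) (x ∘ Sum.inr) isHermitian_one
  rw [hBH] at key
  rw [dotProduct_mulVec, ← Sum.elim_comp_inl_inr x, key]
  simp only [inv_one, Matrix.mul_one, Matrix.one_mul, vecMul_one]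
  by_cases h2 : x ∘ Sum.inr = 0
  · have h1 : x ∘ Sum.inl ≠ 0 := by
      intro h1
      apply hx
      funext i
      cases i with
      | inl i => exact congrFun h1 i
      | inr i => exact congrFun h2 i
    rw [h2]
    simp only [mulVec_zero, add_zero, star_zero, zero_dotProduct, zero_vecMul]
    have := dotProduct_star_self_pos_iff.mpr h1
    simpa using this
  · have hfirst : 0 ≤ star (x ∘ Sum.inl + (Hᵀ * P) *ᵥ (x ∘ Sum.inr)) ⬝ᵥ
        (x ∘ Sum.inl + (Hᵀ * P) *ᵥ (x ∘ Sum.inr)) := dotProduct_star_self_nonneg _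
    have hsecond : 0 < star (x ∘ Sum.inr) ᵥ*
        ((2 * (k - 1)) • P - P * H * (Hᵀ * P)) ⬝ᵥ (x ∘ Sum.inr) := by
      rw [← dotProduct_mulVec]
      exact hS.dotProduct_mulVec_pos h2
    positivity
end

section
/- Let H ∈ ℝ^{n×n} and k > 0 be a real number, and let F be the 2n×2n block matrix F = [[0, I_n],[−H, −kI_n]]. If every eigenvalue of F has negative real part, then H is positive stable, i.e., every eigenvalue of H has positive real part. -/
open Matrix

-- block det lemma
lemma det_shift_block {n : ℕ} (Hc : Matrix (Fin n) (Fin n) ℂ) (kc lam : ℂ) :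
    ((lam • (1 : Matrix (Fin n ⊕ Fin n) (Fin n ⊕ Fin n) ℂ)) -
        fromBlocks 0 1 (-Hc) (-(kc • 1))).det = 0 ↔
      (((lam ^ 2 + kc * lam) • (1 : Matrix (Fin n) (Fin n) ℂ)) + Hc).det = 0 := by
  set G : Matrix (Fin n) (Fin n) ℂ := ((lam ^ 2 + kc * lam) • 1) + Hc with hG
  have hM : (lam • (1 : Matrix (Fin n ⊕ Fin n) (Fin n ⊕ Fin n) ℂ)) -
      fromBlocks 0 1 (-Hc) (-(kc • 1)) =
      fromBlocks (lam • 1) (-1) Hc ((lam + kc) • 1) := by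
    ext (i | i) (j | j) <;>
      simp [Matrix.one_apply, Matrix.smul_apply, mul_ite, add_smul] <;> ring
  set M := fromBlocks (lam • (1:Matrix (Fin n) (Fin n) ℂ)) (-(1:Matrix (Fin n) (Fin n) ℂ)) Hc ((lam + kc) • (1:Matrix (Fin n) (Fin n) ℂ)) with hMdef
  set L : Matrix (Fin n ⊕ Fin n) (Fin n ⊕ Fin n) ℂ := fromBlocks 1 0 ((lam + kc) • 1) 1 with hL
  set J : Matrix (Fin n ⊕ Fin n) (Fin n ⊕ Fin n) ℂ := fromBlocks 0 1 (-1) 0 with hJ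
  have hLMJ : L * M * J = fromBlocks 1 (lam • 1) 0 G := by
    rw [hL, hMdef, hJ, fromBlocks_multiply, fromBlocks_multiply]
    congr 1
    all_goals
      simp [Matrix.smul_mul, Matrix.mul_smul, smul_smul, hG]
    all_goals try module
  have hdetL : L.det = 1 := by
    rw [hL, det_fromBlocks_zero₁₂]; simp
  have hdetLMJ : (L * M * J).det = G.det := by
    rw [hLMJ, det_fromBlocks_zero₂₁]; simp
  have hJJ : J * J = -1 := by
    rw [hJ, fromBlocks_multiply]
    ext (i | i) (j | j) <;> simp [Matrix.one_apply]
  have hdetJ : J.det ≠ 0 := by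
    intro h
    have : (J * J).det = 0 := by rw [det_mul, h, mul_zero]
    rw [hJJ] at this
    simp [det_neg, Fintype.card_sum] at this
  have hMG : M.det * J.det = G.det := by
    have := hdetLMJ
    rwa [det_mul, det_mul, hdetL, one_mul] at this
  rw [hM]
  constructor
  · intro h
    rw [← hMG, h, zero_mul]
  · intro h
    rcases mul_eq_zero.mp (hMG.trans h) with h' | h'
    · exact h'
    · exact absurd h' hdetJ

lemma mem_spectrum_iff_det {m : Type*} [Fintype m] [DecidableEq m]
    (M : Matrix m m ℂ) (z : ℂ) :
    z ∈ spectrum ℂ M ↔ ((z • (1 : Matrix m m ℂ)) - M).det = 0 := by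
  rw [spectrum.mem_iff, Algebra.algebraMap_eq_smul_one]
  rw [Matrix.isUnit_iff_isUnit_det, isUnit_iff_ne_zero, not_not]

/-- Let `F = [[0, I],[−H, −kI]]` with `k > 0`.  If every eigenvalue of `F` has
negative real part, then `H` is positive stable: every eigenvalue of `H` has
positive real part. -/
theorem F_Hurwitz_implies_H_positive_stable
    {n : ℕ} (H : Matrix (Fin n) (Fin n) ℝ) (k : ℝ) (hk : 0 < k)
    (hF : ∀ z ∈ spectrum ℂ
        ((Matrix.fromBlocks (0 : Matrix (Fin n) (Fin n) ℝ) 1 (-H) (-(k • (1 : Matrix (Fin n) (Fin n) ℝ)))).map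
          (fun x : ℝ => (x : ℂ))),
      z.re < 0) :
    ∀ z ∈ spectrum ℂ (H.map (fun x : ℝ => (x : ℂ))), 0 < z.re := by
  intro z hz
  set Hc : Matrix (Fin n) (Fin n) ℂ := H.map (fun x : ℝ => (x : ℂ)) with hHc
  have hFc : (Matrix.fromBlocks (0 : Matrix (Fin n) (Fin n) ℝ) 1 (-H)
        (-(k • (1 : Matrix (Fin n) (Fin n) ℝ)))).map (fun x : ℝ => (x : ℂ)) =
      fromBlocks 0 1 (-Hc) (-((k : ℂ) • 1)) := by
    ext (i | i) (j | j) <;> simp [Matrix.one_apply, apply_ite, hHc, Matrix.map_apply] <;> aesop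
  have hdetz : ((z • (1 : Matrix (Fin n) (Fin n) ℂ)) - Hc).det = 0 :=
    (mem_spectrum_iff_det Hc z).mp hz
  obtain ⟨s, hs⟩ : ∃ s : ℂ, s ^ 2 = (k : ℂ) ^ 2 - 4 * z :=
    IsAlgClosed.exists_pow_nat_eq _ two_pos
  have memF : ∀ l : ℂ, l ^ 2 + (k : ℂ) * l + z = 0 → l.re < 0 := by
    intro l hl
    apply hF
    rw [hFc, mem_spectrum_iff_det, det_shift_block]
    have hval : ((l ^ 2 + (k : ℂ) * l) • (1 : Matrix (Fin n) (Fin n) ℂ)) + Hc =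
        -((z • (1 : Matrix (Fin n) (Fin n) ℂ)) - Hc) := by
      have : l ^ 2 + (k : ℂ) * l = -z := by linear_combination hl
      rw [this]; ext i j; simp [sub_eq_neg_add]
    rw [hval, det_neg, hdetz, mul_zero]
  have h1 : (((-(k : ℂ)) + s) / 2).re < 0 := memF _ (by linear_combination hs / 4)
  have h2 : (((-(k : ℂ)) - s) / 2).re < 0 := memF _ (by linear_combination hs / 4)
  have hprod : z = (((-(k : ℂ)) + s) / 2) * (((-(k : ℂ)) - s) / 2) := by
    linear_combination hs / 4
  have hsum : (((-(k : ℂ)) + s) / 2) + (((-(k : ℂ)) - s) / 2) = -(k : ℂ) := by ring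
  have him : (((-(k : ℂ)) - s) / 2).im = -(((-(k : ℂ)) + s) / 2).im := by
    have he : ((-(k : ℂ)) - s) / 2 = -(((-(k : ℂ)) + s) / 2) + (-(k : ℂ)) := by ring
    rw [he]
    simp
  have hre : z.re = (((-(k : ℂ)) + s) / 2).re * (((-(k : ℂ)) - s) / 2).re +
      (((-(k : ℂ)) + s) / 2).im ^ 2 := by
    rw [hprod, Complex.mul_re, him]; ring
  nlinarith [sq_nonneg (((-(k : ℂ)) + s) / 2).im]
end

section
/- Fix a real number k > 0 and let F = C + E = [[0, I_n],[−H, −kI_n]], where H = L + B. If every solution of the undelayed linear system ε′(t) = Fε(t) (ε : ℝ → ℝ^{2n}) converges to 0 as t → ∞, then node 0 is globally reachable in the augmented digraph Ḡ. -/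
open Matrix

/-- Fix `k > 0` and let `F = [[0, I],[−H, −kI]]` with `H = L + B`.  If every
solution of the undelayed linear system `ε′(t) = Fε(t)` converges to `0` as
`t → ∞`, then node `0` is globally reachable in the augmented digraph `Ḡ`. -/
theorem undelayed_convergence_implies_leader_globally_reachable
    {n : ℕ} (A : Matrix (Fin n) (Fin n) ℝ)
    (hA : ∀ i j, 0 ≤ A i j) (hdiag : ∀ i, A i i = 0)
    (b : Fin n → ℝ) (hb : ∀ i, 0 ≤ b i)
    (k : ℝ) (hk : 0 < k)
    (H : Matrix (Fin n) (Fin n) ℝ) (hH : H = lap A + Matrix.diagonal b)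
    (hconv : ∀ ε : ℝ → (Fin n ⊕ Fin n → ℝ),
      (∀ t : ℝ, HasDerivAt ε
        ((Matrix.fromBlocks (0 : Matrix (Fin n) (Fin n) ℝ) 1 (-H)
            (-(k • (1 : Matrix (Fin n) (Fin n) ℝ)))).mulVec (ε t)) t) →
      Filter.Tendsto ε Filter.atTop (nhds 0)) :
    leaderGloballyReachable A b := by
  classical
  letI : SeminormedRing (Matrix (Fin n ⊕ Fin n) (Fin n ⊕ Fin n) ℝ) :=
    Matrix.linftyOpSemiNormedRing
  letI : NormedRing (Matrix (Fin n ⊕ Fin n) (Fin n ⊕ Fin n) ℝ) :=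
    Matrix.linftyOpNormedRing
  letI : NormedAlgebra ℝ (Matrix (Fin n ⊕ Fin n) (Fin n ⊕ Fin n) ℝ) :=
    Matrix.linftyOpNormedAlgebra
  intro i
  by_contra hcon
  push_neg at hcon
  obtain ⟨hbi, hSb⟩ := hcon
  -- the set of nodes reachable from `i` has `b = 0` and no arcs leaving it
  have bS : ∀ j, reaches A i j → b j = 0 := fun j hj =>
    le_antisymm (hSb j hj) (hb j)
  have hAS : ∀ s m, reaches A i s → ¬ reaches A i m → A s m = 0 := by
    intro s m hs hm
    by_contra h
    exact hm (hs.tail (lt_of_le_of_ne (hA s m) (Ne.symm h)))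
  have hne : ∀ s m, reaches A i s → ¬ reaches A i m → s ≠ m := by
    intro s m hs hm h; exact hm (h ▸ hs)
  have HS1 : ∀ s m, reaches A i s → ¬ reaches A i m → H s m = 0 := by
    intro s m hs hm
    have hsm := hne s m hs hm
    simp [hH, lap, Matrix.sub_apply, Matrix.add_apply, Matrix.diagonal_apply_ne _ hsm,
      hAS s m hs hm]
  have HS2 : ∀ s, reaches A i s → ∑ m, H s m = 0 := by
    intro s hs
    have : ∑ m, H s m = (∑ m, Matrix.diagonal (fun i => ∑ j, A i j) s m)
        - (∑ m, A s m) + ∑ m, Matrix.diagonal b s m := by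
      simp [hH, lap, Matrix.sub_apply, Matrix.add_apply, Finset.sum_add_distrib,
        Finset.sum_sub_distrib]
    rw [this]
    simp [Matrix.diagonal_apply, bS s hs]
  -- notation
  set F : Matrix (Fin n ⊕ Fin n) (Fin n ⊕ Fin n) ℝ :=
    Matrix.fromBlocks (0 : Matrix (Fin n) (Fin n) ℝ) 1 (-H)
      (-(k • (1 : Matrix (Fin n) (Fin n) ℝ))) with hF
  set x : Fin n → ℝ := fun s => if reaches A i s then 1 else 0 with hx
  set v : Fin n ⊕ Fin n → ℝ := Sum.elim x (fun _ => 0) with hv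
  set P : Fin n ⊕ Fin n → Prop := Sum.elim (reaches A i) (reaches A i) with hP
  -- rows of F indexed by P vanish outside P
  have hFsupp : ∀ j m, P j → ¬ P m → F j m = 0 := by
    rintro (s | s) (u | u) hj hm <;>
      simp only [hP, Sum.elim_inl, Sum.elim_inr] at hj hm <;>
      have hsu := hne s u hj hm <;>
      simp [hF, Matrix.fromBlocks_apply₁₁, Matrix.fromBlocks_apply₁₂,
        Matrix.fromBlocks_apply₂₁, Matrix.fromBlocks_apply₂₂,
        Matrix.one_apply_ne hsu, HS1 s u hj hm, Matrix.smul_apply]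
  have hvanish : ∀ w : Fin n ⊕ Fin n → ℝ, (∀ m, P m → w m = 0) →
      ∀ j, P j → (F.mulVec w) j = 0 := by
    intro w hw j hj
    rw [Matrix.mulVec, dotProduct]
    refine Finset.sum_eq_zero fun m _ => ?_
    by_cases hm : P m
    · rw [hw m hm, mul_zero]
    · rw [hFsupp j m hj hm, zero_mul]
  -- H applied to the indicator vanishes on P
  have hHx : ∀ s, reaches A i s → (H.mulVec x) s = 0 := by
    intro s hs
    rw [Matrix.mulVec, dotProduct]
    have : ∀ m ∈ Finset.univ, H s m * x m = H s m := by
      intro m _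
      by_cases hm : reaches A i m
      · simp [hx, hm]
      · simp [HS1 s m hs hm]
    rw [Finset.sum_congr rfl this]
    exact HS2 s hs
  have hFv : ∀ j, P j → (F.mulVec v) j = 0 := by
    rintro (s | s) hj <;> simp only [hP, Sum.elim_inl, Sum.elim_inr] at hj <;>
      rw [Matrix.mulVec, dotProduct, Fintype.sum_sum_type]
    · simp [hF, hv]
    · have hH0 := hHx s hj
      rw [Matrix.mulVec, dotProduct] at hH0
      have e1 : ∀ u ∈ Finset.univ, F (Sum.inr s) (Sum.inl u) * v (Sum.inl u)
          = -(H s u * x u) := by intro u _; simp [hF, hv]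
      have e2 : ∀ u ∈ Finset.univ, F (Sum.inr s) (Sum.inr u) * v (Sum.inr u) = 0 := by
        intro u _; simp [hv]
      rw [Finset.sum_congr rfl e1, Finset.sum_congr rfl e2, Finset.sum_const_zero,
        add_zero, Finset.sum_neg_distrib, hH0, neg_zero]
  have hpow : ∀ m : ℕ, ∀ j, P j → ((F ^ (m + 1)).mulVec v) j = 0 := by
    intro m
    induction m with
    | zero => simpa using hFv
    | succ m ih =>
      intro j hj
      rw [pow_succ' F (m+1), ← Matrix.mulVec_mulVec]
      exact hvanish _ ih j hj
  -- the continuous linear map `M ↦ M.mulVec v`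
  let L : Matrix (Fin n ⊕ Fin n) (Fin n ⊕ Fin n) ℝ →ₗ[ℝ] (Fin n ⊕ Fin n → ℝ) :=
    { toFun := fun M => M.mulVec v
      map_add' := fun M N => Matrix.add_mulVec M N v
      map_smul' := fun c M => Matrix.smul_mulVec c M v }
  let Lc : Matrix (Fin n ⊕ Fin n) (Fin n ⊕ Fin n) ℝ →L[ℝ] (Fin n ⊕ Fin n → ℝ) :=
    LinearMap.toContinuousLinearMap L
  have hLc : ∀ M : Matrix (Fin n ⊕ Fin n) (Fin n ⊕ Fin n) ℝ, Lc M = M.mulVec v := fun _ => rfl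
  -- the solution
  set ε : ℝ → (Fin n ⊕ Fin n → ℝ) := fun t => (NormedSpace.exp (t • F)).mulVec v with hε
  have hderiv : ∀ t : ℝ, HasDerivAt ε (F.mulVec (ε t)) t := by
    intro t
    have h1 : HasDerivAt (fun u : ℝ => NormedSpace.exp (u • F))
        (F * NormedSpace.exp (t • F)) t := hasDerivAt_exp_smul_const' (𝕂 := ℝ) F t
    have h2 := Lc.hasFDerivAt.comp_hasDerivAt t h1
    have h3 : (Lc ∘ fun u : ℝ => NormedSpace.exp (u • F)) = ε := by
      funext u; rw [Function.comp_apply, hLc, hε]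
    have h4 : Lc (F * NormedSpace.exp (t • F)) = F.mulVec (ε t) := by
      rw [hLc, ← Matrix.mulVec_mulVec, hε]
    rw [h3] at h2
    rw [← h4]
    exact h2
  -- the P-components of the solution are constant
  have hconst : ∀ t : ℝ, ε t (Sum.inl i) = 1 := by
    intro t
    have hPi : P (Sum.inl i) := Relation.ReflTransGen.refl
    have hsum := NormedSpace.expSeries_summable' (𝕂 := ℝ) (t • F)
    have h0 : ε t = Lc (NormedSpace.exp (t • F)) := rfl
    rw [h0, NormedSpace.exp_eq_tsum (𝕂 := ℝ), Lc.map_tsum hsum]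
    have hterm : ∀ m : ℕ, m ≠ 0 →
        (Lc ((m.factorial : ℝ)⁻¹ • (t • F) ^ m)) (Sum.inl i) = 0 := by
      intro m hm
      obtain ⟨m', rfl⟩ := Nat.exists_eq_succ_of_ne_zero hm
      rw [_root_.map_smul, smul_pow]
      have : Lc (t ^ (m' + 1) • F ^ (m' + 1)) = t ^ (m' + 1) • (F ^ (m' + 1)).mulVec v := by
        rw [_root_.map_smul, hLc]
      rw [this]
      simp [hpow m' _ hPi]
    have := tsum_apply (f := fun m : ℕ => Lc ((m.factorial : ℝ)⁻¹ • (t • F) ^ m)) (x := Sum.inl i)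
      (hsum.map Lc.toLinearMap.toAddMonoidHom Lc.continuous)
    rw [this, tsum_eq_single 0 hterm]
    simp [hLc, Matrix.one_mulVec, hv, hx]
    exact Relation.ReflTransGen.refl
  -- contradiction with convergence
  have htend := hconv ε hderiv
  have h1 : Filter.Tendsto (fun t => ε t (Sum.inl i)) Filter.atTop (nhds 0) := by
    have := ((continuous_apply (Sum.inl i)).tendsto (0 : Fin n ⊕ Fin n → ℝ)).comp htend
    exact this
  have h2 : Filter.Tendsto (fun _ : ℝ => (1 : ℝ)) Filter.atTop (nhds 0) := by
    refine h1.congr fun t => (hconst t)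
  have := tendsto_nhds_unique h2 tendsto_const_nhds
  exact one_ne_zero this.symm
end

section
/- If a weighted digraph G is balanced and has a globally reachable node, then G is strongly connected. -/
/-- The weighted digraph is balanced: for every node, in-weight equals out-weight. -/
def balanced {n : ℕ} (A : Matrix (Fin n) (Fin n) ℝ) : Prop :=
  ∀ i : Fin n, ∑ j, A i j = ∑ j, A j i

/-- If a weighted digraph `G` is balanced and has a globally reachable node, then
`G` is strongly connected. -/
theorem balanced_globally_reachable_strongly_connected
    {n : ℕ} (A : Matrix (Fin n) (Fin n) ℝ)
    (hA : ∀ i j, 0 ≤ A i j) (hdiag : ∀ i, A i i = 0)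
    (hbal : balanced A)
    (hglob : ∃ g : Fin n, ∀ i : Fin n, reaches A i g) :
    ∀ i j : Fin n, reaches A i j := by
  classical
  obtain ⟨g, hg⟩ := hglob
  set S : Finset (Fin n) := Finset.univ.filter (fun j => reaches A g j) with hS
  have hmemS : ∀ j, j ∈ S ↔ reaches A g j := by
    intro j; simp [hS]
  -- forward cross edges vanish
  have hfwd : ∀ i ∈ S, ∀ j ∈ Sᶜ, A i j = 0 := by
    intro i hi j hj
    rcases lt_or_eq_of_le (hA i j) with hpos | h
    · exfalso
      rw [Finset.mem_compl] at hj
      exact hj ((hmemS j).2 (((hmemS i).1 hi).tail hpos))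
    · exact h.symm
  -- balance summed over S
  have hsum : ∑ i ∈ S, ∑ j ∈ Sᶜ, A i j = ∑ i ∈ S, ∑ j ∈ Sᶜ, A j i := by
    have h1 : ∑ i ∈ S, ∑ j, A i j = ∑ i ∈ S, ∑ j, A j i :=
      Finset.sum_congr rfl (fun i _ => hbal i)
    have h2 : ∀ B : Matrix (Fin n) (Fin n) ℝ,
        ∑ i ∈ S, ∑ j, B i j
          = ∑ i ∈ S, ∑ j ∈ S, B i j + ∑ i ∈ S, ∑ j ∈ Sᶜ, B i j := by
      intro B
      rw [← Finset.sum_add_distrib]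
      exact Finset.sum_congr rfl fun i _ => (Finset.sum_add_sum_compl S (B i)).symm
    have h3 : ∑ i ∈ S, ∑ j ∈ S, A i j = ∑ i ∈ S, ∑ j ∈ S, A j i :=
      Finset.sum_comm
    rw [h2 (fun i j => A i j), h2 (fun i j => A j i)] at h1
    simpa [h3] using h1
  have hLHS : ∑ i ∈ S, ∑ j ∈ Sᶜ, A i j = 0 :=
    Finset.sum_eq_zero fun i hi => Finset.sum_eq_zero fun j hj => hfwd i hi j hj
  -- backward cross edges vanish too
  have hbwd : ∀ i ∈ S, ∀ j ∈ Sᶜ, A j i = 0 := by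
    have h0 : ∑ i ∈ S, ∑ j ∈ Sᶜ, A j i = 0 := by rw [← hsum, hLHS]
    have := (Finset.sum_eq_zero_iff_of_nonneg
      (fun i _ => Finset.sum_nonneg fun j _ => hA j i)).1 h0
    intro i hi j hj
    exact (Finset.sum_eq_zero_iff_of_nonneg (fun j _ => hA j i)).1 (this i hi) j hj
  -- every node is in S
  have hall : ∀ x, reaches A x g → x ∈ S := by
    intro x hx
    induction hx using Relation.ReflTransGen.head_induction_on with
    | refl => exact (hmemS g).2 Relation.ReflTransGen.refl
    | @head a c hac hcg ih =>
      by_contra ha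
      have := hbwd c ih a (Finset.mem_compl.2 ha)
      exact absurd this (ne_of_gt hac)
  intro i j
  exact (hg i).trans ((hmemS j).1 (hall j (hg j)))
end

section
/- If a weighted digraph G is balanced and strongly connected, then the symmetric matrix L + Lᵀ is positive semidefinite and its kernel is exactly the span of the vector 1 = (1,…,1)ᵀ; equivalently, zero is a simple eigenvalue of (L + Lᵀ)/2. -/
open Matrix

theorem quadform {n : ℕ} (A : Matrix (Fin n) (Fin n) ℝ)
    (hbal : ∀ i : Fin n, ∑ j, A i j = ∑ j, A j i) (x : Fin n → ℝ) :
    x ⬝ᵥ (lap A + (lap A)ᵀ).mulVec x = ∑ i, ∑ j, A i j * (x i - x j)^2 := by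
  simp only [dotProduct, mulVec, lap, Matrix.add_apply, Matrix.sub_apply,
    Matrix.transpose_apply, Matrix.diagonal_apply]
  have h1 : ∀ i : Fin n, ∑ j, (if i = j then (∑ k, A i k) else 0) * x j
      = (∑ k, A i k) * x i := by
    intro i
    rw [Finset.sum_eq_single i]
    · simp
    · intro b _ hb; simp [Ne.symm hb]
    · simp
  have h2 : ∀ i : Fin n, ∑ j, (if j = i then (∑ k, A j k) else 0) * x j
      = (∑ k, A i k) * x i := by
    intro i
    rw [Finset.sum_eq_single i]
    · simp
    · intro b _ hb; simp [hb]
    · simp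
  set S1 := ∑ i, (∑ k, A i k) * x i ^ 2 with hS1
  set S2 := ∑ i, ∑ j, x i * (A i j * x j) with hS2
  have hS2' : (∑ i, ∑ j, x i * (A j i * x j)) = S2 := by
    rw [Finset.sum_comm, hS2]
    exact Finset.sum_congr rfl fun i _ => Finset.sum_congr rfl fun j _ => by ring
  have lhs : ∑ i, x i * ∑ j, ((if i = j then (∑ k, A i k) else 0) - A i j +
      ((if j = i then (∑ k, A j k) else 0) - A j i)) * x j
      = 2 * S1 - 2 * S2 := by
    have step : ∀ i : Fin n, x i * ∑ j, ((if i = j then (∑ k, A i k) else 0) - A i j +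
        ((if j = i then (∑ k, A j k) else 0) - A j i)) * x j
        = 2 * ((∑ k, A i k) * x i ^ 2) - (∑ j, x i * (A i j * x j))
          - (∑ j, x i * (A j i * x j)) := by
      intro i
      have inner : ∑ j, ((if i = j then (∑ k, A i k) else 0) - A i j +
          ((if j = i then (∑ k, A j k) else 0) - A j i)) * x j
          = 2 * ((∑ k, A i k) * x i) - (∑ j, A i j * x j) - (∑ j, A j i * x j) := by
        simp only [sub_mul, add_mul]
        rw [Finset.sum_add_distrib, Finset.sum_sub_distrib, Finset.sum_sub_distrib, h1 i, h2 i]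
        ring
      rw [inner, mul_sub, mul_sub, Finset.mul_sum, Finset.mul_sum]
      ring_nf
    rw [Finset.sum_congr rfl fun i _ => step i, Finset.sum_sub_distrib,
      Finset.sum_sub_distrib, hS2', ← Finset.mul_sum, ← hS2, ← hS1]
    ring
  rw [lhs]
  have rhs : ∑ i, ∑ j, A i j * (x i - x j)^2 = 2 * S1 - 2 * S2 := by
    have step : ∀ i j : Fin n, A i j * (x i - x j)^2
        = A i j * x i ^ 2 - 2 * (x i * (A i j * x j)) + A i j * x j ^ 2 := by
      intro i j; ring
    calc ∑ i, ∑ j, A i j * (x i - x j)^2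
        = ∑ i, ∑ j, (A i j * x i ^ 2 - 2 * (x i * (A i j * x j)) + A i j * x j ^ 2) := by
          exact Finset.sum_congr rfl fun i _ => Finset.sum_congr rfl fun j _ => step i j
      _ = (∑ i, ∑ j, A i j * x i ^ 2) - 2 * S2 + (∑ i, ∑ j, A i j * x j ^ 2) := by
          simp only [Finset.sum_add_distrib, Finset.sum_sub_distrib, hS2, Finset.mul_sum]
      _ = S1 - 2 * S2 + S1 := by
          congr 1
          · congr 1
            exact Finset.sum_congr rfl fun i _ => by rw [← Finset.sum_mul]
          · rw [Finset.sum_comm]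
            exact Finset.sum_congr rfl fun j _ => by rw [← Finset.sum_mul, ← hbal j]
      _ = 2 * S1 - 2 * S2 := by ring
  rw [rhs]

/-- If a weighted digraph `G` is balanced and strongly connected, then `L + Lᵀ`
is positive semidefinite and its kernel is exactly the span of the all-ones
vector (equivalently, zero is a simple eigenvalue of `(L + Lᵀ)/2`). -/
theorem balanced_strongly_connected_laplacian_sym
    {n : ℕ} (A : Matrix (Fin n) (Fin n) ℝ)
    (hA : ∀ i j, 0 ≤ A i j) (hdiag : ∀ i, A i i = 0)
    (hbal : balanced A)
    (hconn : ∀ i j : Fin n, reaches A i j) :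
    (lap A + (lap A)ᵀ).PosSemidef ∧
      (∀ x : Fin n → ℝ, (lap A + (lap A)ᵀ).mulVec x = 0 ↔ ∃ c : ℝ, x = fun _ => c) := by
  have herm : (lap A + (lap A)ᵀ).IsHermitian := by
    unfold Matrix.IsHermitian
    rw [conjTranspose_eq_transpose_of_trivial, transpose_add, transpose_transpose, add_comm]
  have psd : (lap A + (lap A)ᵀ).PosSemidef := by
    refine Matrix.posSemidef_iff_dotProduct_mulVec.mpr ⟨herm, fun x => ?_⟩
    simp only [RCLike.re_to_real, star_trivial]
    rw [quadform A hbal x]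
    exact Finset.sum_nonneg fun i _ => Finset.sum_nonneg fun j _ =>
      mul_nonneg (hA i j) (sq_nonneg _)
  refine ⟨psd, fun x => ⟨fun hx => ?_, fun ⟨c, hc⟩ => ?_⟩⟩
  · -- kernel ⊆ constants
    have hform : ∑ i, ∑ j, A i j * (x i - x j)^2 = 0 := by
      rw [← quadform A hbal x, hx, dotProduct_zero]
    have hterm : ∀ i j : Fin n, A i j * (x i - x j)^2 = 0 := by
      intro i j
      have h1 := (Finset.sum_eq_zero_iff_of_nonneg (fun i _ =>
        Finset.sum_nonneg fun j _ => mul_nonneg (hA i j) (sq_nonneg _))).mp hform i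
        (Finset.mem_univ i)
      exact (Finset.sum_eq_zero_iff_of_nonneg (fun j _ =>
        mul_nonneg (hA i j) (sq_nonneg _))).mp h1 j (Finset.mem_univ j)
    have hedge : ∀ i j : Fin n, 0 < A i j → x i = x j := by
      intro i j hij
      have := hterm i j
      rcases mul_eq_zero.mp this with h | h
      · exact absurd h (ne_of_gt hij)
      · have := pow_eq_zero_iff (n := 2) (by norm_num) |>.mp h
        linarith [sub_eq_zero.mp this]
    rcases Nat.eq_zero_or_pos n with hn | hn
    · exact ⟨0, funext fun i => absurd i.2 (by omega)⟩
    · have i0 : Fin n := ⟨0, hn⟩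
      refine ⟨x i0, funext fun j => ?_⟩
      have h := hconn i0 j
      induction h with
      | refl => rfl
      | tail _ hbc ih => rw [← ih, hedge _ _ hbc]
  · -- constants ⊆ kernel
    subst hc
    funext i
    simp only [mulVec, dotProduct, Matrix.add_apply, lap, Matrix.sub_apply,
      Matrix.transpose_apply, Matrix.diagonal_apply, Pi.zero_apply]
    rw [← Finset.sum_mul]
    have : ∑ j, ((if i = j then (∑ k, A i k) else 0) - A i j +
        ((if j = i then (∑ k, A j k) else 0) - A j i)) = 0 := by
      rw [Finset.sum_add_distrib, Finset.sum_sub_distrib, Finset.sum_sub_distrib]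
      rw [Finset.sum_ite_eq Finset.univ i (fun _ => ∑ k, A i k),
        Finset.sum_ite_eq' Finset.univ i (fun j => ∑ k, A j k)]
      simp [hbal i]
    rw [this, zero_mul]
end

section
/- If a weighted digraph G is balanced and strongly connected, and B = diag(b_1,…,b_n) is a diagonal matrix with all b_i ≥ 0 and at least one b_i > 0, then the symmetric matrix (1/2)(L + Lᵀ) + B is positive definite. -/
open Matrix

lemma lap_quad {n : ℕ} (A : Matrix (Fin n) (Fin n) ℝ) (hbal : balanced A) (x : Fin n → ℝ) :
    x ⬝ᵥ (lap A *ᵥ x) = (1/2) * ∑ i, ∑ j, A i j * (x i - x j)^2 := by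
  have key : (∑ i, ∑ j, A i j * x j^2) = ∑ i, ∑ j, A i j * x i^2 := by
    rw [Finset.sum_comm]
    refine Finset.sum_congr rfl fun i _ => ?_
    rw [← Finset.sum_mul, ← Finset.sum_mul, hbal i]
  have lhs : x ⬝ᵥ (lap A *ᵥ x)
      = ∑ i, ∑ j, (A i j * x i^2) - ∑ i, ∑ j, (x i * (A i j * x j)) := by
    simp only [lap, Matrix.sub_mulVec, dotProduct_sub]
    congr 1
    · simp only [dotProduct, mulVec, Matrix.diagonal_apply, Finset.mul_sum, Finset.sum_mul]
      simp [dotProduct, Finset.mul_sum]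
      refine Finset.sum_congr rfl fun i _ => ?_
      rw [← mul_assoc, mul_comm (x i), mul_assoc, Finset.sum_mul]
      exact Finset.sum_congr rfl fun j _ => by ring
    · simp [dotProduct, mulVec, Finset.mul_sum]
  have rhs : (∑ i, ∑ j, A i j * (x i - x j)^2)
      = ∑ i, ∑ j, (A i j * x i^2) + ∑ i, ∑ j, (A i j * x j^2)
        - 2 * ∑ i, ∑ j, (x i * (A i j * x j)) := by
    have : ∀ i j : Fin n, A i j * (x i - x j)^2
        = (A i j * x i^2 + A i j * x j^2) - 2 * (x i * (A i j * x j)) := by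
      intro i j; ring
    simp only [this, Finset.sum_sub_distrib, Finset.sum_add_distrib, Finset.mul_sum]
  rw [lhs, rhs, key]; ring

lemma reaches_eq {n : ℕ} (A : Matrix (Fin n) (Fin n) ℝ) (x : Fin n → ℝ)
    (h : ∀ i j, 0 < A i j → x i = x j) {i j : Fin n} (hr : reaches A i j) :
    x i = x j := by
  induction hr with
  | refl => rfl
  | tail _ hbc ih => exact ih.trans (h _ _ hbc)

/-- If a weighted digraph `G` is balanced and strongly connected, and
`B = diag(b)` with all `b i ≥ 0` and at least one `b i > 0`, then
`(1/2)(L + Lᵀ) + B` is positive definite. -/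
theorem balanced_strongly_connected_leader_posDef
    {n : ℕ} (A : Matrix (Fin n) (Fin n) ℝ)
    (hA : ∀ i j, 0 ≤ A i j) (hdiag : ∀ i, A i i = 0)
    (hbal : balanced A)
    (hconn : ∀ i j : Fin n, reaches A i j)
    (b : Fin n → ℝ) (hb : ∀ i, 0 ≤ b i) (hpos : ∃ i, 0 < b i) :
    (((1 : ℝ) / 2) • (lap A + (lap A)ᵀ) + Matrix.diagonal b).PosDef := by
  set M := ((1 : ℝ) / 2) • (lap A + (lap A)ᵀ) + Matrix.diagonal b with hM
  have hquad : ∀ x : Fin n → ℝ, x ⬝ᵥ (M *ᵥ x)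
      = (1/2) * (∑ i, ∑ j, A i j * (x i - x j)^2) + ∑ i, b i * x i ^ 2 := by
    intro x
    have h1 : x ⬝ᵥ ((lap A)ᵀ *ᵥ x) = x ⬝ᵥ (lap A *ᵥ x) := by
      rw [Matrix.mulVec_transpose, dotProduct_comm, ← Matrix.dotProduct_mulVec]
    have h2 : x ⬝ᵥ (Matrix.diagonal b *ᵥ x) = ∑ i, b i * x i ^ 2 := by
      simp [dotProduct, Matrix.mulVec_diagonal]
      exact Finset.sum_congr rfl fun i _ => by ring
    rw [hM, Matrix.add_mulVec, dotProduct_add, Matrix.smul_mulVec,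
      dotProduct_smul, Matrix.add_mulVec, dotProduct_add, h1,
      lap_quad A hbal, h2]
    simp only [smul_eq_mul]
    ring
  refine Matrix.posDef_iff_dotProduct_mulVec.mpr ⟨?_, ?_⟩
  · ext i j
    rw [hM]
    simp only [Matrix.conjTranspose_apply, Matrix.add_apply, Matrix.smul_apply,
      Matrix.transpose_apply, Matrix.diagonal_apply, smul_eq_mul, star_trivial]
    by_cases h : i = j
    · subst h; ring
    · rw [if_neg (Ne.symm h), if_neg h]; ring
  · intro x hx
    rw [show star x = x from star_trivial x, hquad x]
    have hSnn : ∀ i ∈ Finset.univ, (0:ℝ) ≤ ∑ j, A i j * (x i - x j)^2 :=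
      fun i _ => Finset.sum_nonneg fun j _ => mul_nonneg (hA i j) (sq_nonneg _)
    have hS0 : (0:ℝ) ≤ ∑ i, ∑ j, A i j * (x i - x j)^2 := Finset.sum_nonneg hSnn
    have hT0 : (0:ℝ) ≤ ∑ i, b i * x i ^ 2 :=
      Finset.sum_nonneg fun i _ => mul_nonneg (hb i) (sq_nonneg _)
    refine lt_of_le_of_ne (by linarith) fun h0 => ?_
    have hS : ∑ i, ∑ j, A i j * (x i - x j)^2 = 0 := by linarith
    have hT : ∑ i, b i * x i ^ 2 = 0 := by linarith
    have hedge : ∀ i j, 0 < A i j → x i = x j := by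
      intro i j hij
      have h1 := (Finset.sum_eq_zero_iff_of_nonneg hSnn).mp hS i (Finset.mem_univ i)
      have h2 := (Finset.sum_eq_zero_iff_of_nonneg
        (fun j _ => mul_nonneg (hA i j) (sq_nonneg (x i - x j)))).mp h1 j (Finset.mem_univ j)
      have : (x i - x j)^2 = 0 := by
        rcases mul_eq_zero.mp h2 with h | h
        · exact absurd h hij.ne'
        · exact h
      have := pow_eq_zero_iff (n := 2) (by norm_num) |>.mp this
      linarith [sub_eq_zero.mp this]
    obtain ⟨k, hk⟩ := hpos
    have hxk : x k = 0 := by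
      have h1 := (Finset.sum_eq_zero_iff_of_nonneg
        (fun i _ => mul_nonneg (hb i) (sq_nonneg (x i)))).mp hT k (Finset.mem_univ k)
      rcases mul_eq_zero.mp h1 with h | h
      · exact absurd h hk.ne'
      · exact pow_eq_zero_iff (n := 2) (by norm_num) |>.mp h
    apply hx
    funext i
    have := reaches_eq A x hedge (hconn i k)
    simp [this, hxk]
end

section
/- Let H ∈ ℝ^{n×n} be such that H + Hᵀ is positive definite, let λ̃ be the smallest eigenvalue of H + Hᵀ and μ̃ the largest eigenvalue of HHᵀ. If k > μ̃/(2λ̃) + 1, then the 2n×2n block matrix Q = [[H + Hᵀ, Hᵀ],[H, 2(k−1)I_n]] is symmetric positive definite. -/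
open Matrix


theorem aux_spec_vec {n : ℕ} {M : Matrix (Fin n) (Fin n) ℝ} {a : ℝ} (ha : a ∈ spectrum ℝ M) :
    ∃ v : Fin n → ℝ, v ≠ 0 ∧ M *ᵥ v = a • v := by
  rw [spectrum.mem_iff, Matrix.isUnit_iff_isUnit_det, isUnit_iff_ne_zero, not_not] at ha
  obtain ⟨v, hv0, hv⟩ := (Matrix.exists_mulVec_eq_zero_iff).mpr ha
  refine ⟨v, hv0, ?_⟩
  rw [Algebra.algebraMap_eq_smul_one] at hv
  rw [sub_mulVec, smul_mulVec, one_mulVec, sub_eq_zero] at hv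
  exact hv.symm

theorem aux_ub {n : ℕ} {M : Matrix (Fin n) (Fin n) ℝ} (hM : M.IsHermitian) {c : ℝ}
    (h : ∀ a ∈ spectrum ℝ M, a ≤ c) (v : Fin n → ℝ) :
    v ⬝ᵥ (M *ᵥ v) ≤ c * (v ⬝ᵥ v) := by
  have hN : (c • (1 : Matrix (Fin n) (Fin n) ℝ) - M).IsHermitian := by
    simp [Matrix.IsHermitian, conjTranspose_sub, conjTranspose_smul, hM.eq,
      Matrix.conjTranspose_eq_transpose_of_trivial] at hM ⊢
    simp [Matrix.IsHermitian, hM]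
  have hNs : (c • (1 : Matrix (Fin n) (Fin n) ℝ) - M).PosSemidef := by
    apply (Matrix.IsHermitian.posSemidef_iff_eigenvalues_nonneg hN).mpr
    intro i
    have hmem := Matrix.IsHermitian.eigenvalues_mem_spectrum_real hN i
    have e : (algebraMap ℝ (Matrix (Fin n) (Fin n) ℝ)) c - M
        = c • (1 : Matrix (Fin n) (Fin n) ℝ) - M := by
      rw [Algebra.algebraMap_eq_smul_one]
    have hspec := spectrum.singleton_sub_eq M c
    rw [e] at hspec
    rw [← hspec] at hmem
    obtain ⟨x, hx, y, hy, hxy⟩ := Set.mem_sub.mp hmem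
    rw [Set.mem_singleton_iff] at hx
    subst hx
    have := h y hy
    rw [← hxy]
    exact sub_nonneg.mpr this
  have := hNs.dotProduct_mulVec_nonneg v
  rw [star_trivial, sub_mulVec, smul_mulVec, one_mulVec, dotProduct_sub,
    dotProduct_smul] at this
  simp only [smul_eq_mul] at this
  linarith

theorem aux_lb {n : ℕ} {M : Matrix (Fin n) (Fin n) ℝ} (hM : M.IsHermitian) {c : ℝ}
    (h : ∀ a ∈ spectrum ℝ M, c ≤ a) (v : Fin n → ℝ) :
    c * (v ⬝ᵥ v) ≤ v ⬝ᵥ (M *ᵥ v) := by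
  have hM' : (-M).IsHermitian := hM.neg
  have h' : ∀ a ∈ spectrum ℝ (-M), a ≤ -c := by
    intro a ha
    rw [← spectrum.neg_eq, Set.mem_neg] at ha
    have := h (-a) ha
    linarith
  have := aux_ub hM' h' v
  rw [neg_mulVec, dotProduct_neg] at this
  linarith

/-- Let `H` be such that `H + Hᵀ` is positive definite, `λ̃` the smallest
eigenvalue of `H + Hᵀ` and `μ̃` the largest eigenvalue of `HHᵀ`.  If
`k > μ̃/(2λ̃) + 1`, then `Q = [[H + Hᵀ, Hᵀ],[H, 2(k−1)I]]` is symmetric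
positive definite. -/
theorem block_Q_switched_posDef
    {n : ℕ} (H : Matrix (Fin n) (Fin n) ℝ)
    (hH : (H + Hᵀ).PosDef)
    (lam μ k : ℝ)
    (hlam : IsLeast (spectrum ℝ (H + Hᵀ)) lam)
    (hμ : IsGreatest (spectrum ℝ (H * Hᵀ)) μ)
    (hk : μ / (2 * lam) + 1 < k) :
    (Matrix.fromBlocks (H + Hᵀ) Hᵀ H
        ((2 * (k - 1)) • (1 : Matrix (Fin n) (Fin n) ℝ))).IsSymm ∧
      (Matrix.fromBlocks (H + Hᵀ) Hᵀ H
        ((2 * (k - 1)) • (1 : Matrix (Fin n) (Fin n) ℝ))).PosDef := by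
  -- positivity of lam
  have hlam0 : 0 < lam := by
    obtain ⟨v, hv0, hv⟩ := aux_spec_vec hlam.1
    have hpos := hH.dotProduct_mulVec_pos hv0
    rw [star_trivial, hv, dotProduct_smul, smul_eq_mul] at hpos
    have hvv : 0 < v ⬝ᵥ v := by
      have h1 : 0 ≤ v ⬝ᵥ v := Finset.sum_nonneg fun i _ => mul_self_nonneg _
      rcases h1.lt_or_eq with h | h
      · exact h
      · exfalso
        rw [← h, mul_zero] at hpos
        exact lt_irrefl 0 hpos
    by_contra hc
    push_neg at hc
    nlinarith
  have hlamne : lam ≠ 0 := ne_of_gt hlam0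
  -- symmetry
  have hsymm : (Matrix.fromBlocks (H + Hᵀ) Hᵀ H
      ((2 * (k - 1)) • (1 : Matrix (Fin n) (Fin n) ℝ))).IsSymm := by
    have hA : (H + Hᵀ)ᵀ = H + Hᵀ := by
      rw [transpose_add, transpose_transpose, add_comm]
    rw [Matrix.IsSymm, fromBlocks_transpose, hA, transpose_transpose, transpose_smul,
      transpose_one]
  refine ⟨hsymm, Matrix.PosDef.of_dotProduct_mulVec_pos ?_ ?_⟩
  · -- Hermitian
    rw [Matrix.IsHermitian, conjTranspose_eq_transpose_of_trivial]
    exact hsymm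
  · intro x hx
    set u : Fin n → ℝ := x ∘ Sum.inl with hu_def
    set v : Fin n → ℝ := x ∘ Sum.inr with hv_def
    have hxe : x = Sum.elim u v := by
      funext i; cases i <;> rfl
    have hHHt : (H * Hᵀ).IsHermitian := by
      rw [← conjTranspose_eq_transpose_of_trivial]
      exact isHermitian_mul_conjTranspose_self H
    set w : Fin n → ℝ := Hᵀ *ᵥ v with hw_def
    -- expand the quadratic form
    have hquad : star x ⬝ᵥ ((Matrix.fromBlocks (H + Hᵀ) Hᵀ H
        ((2 * (k - 1)) • (1 : Matrix (Fin n) (Fin n) ℝ))) *ᵥ x)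
        = u ⬝ᵥ ((H + Hᵀ) *ᵥ u) + 2 * (u ⬝ᵥ w) + 2 * (k - 1) * (v ⬝ᵥ v) := by
      rw [star_trivial, hxe]
      rw [fromBlocks_mulVec, sumElim_dotProduct_sumElim, dotProduct_add, dotProduct_add]
      simp only [Sum.elim_comp_inl, Sum.elim_comp_inr]
      have hcross : v ⬝ᵥ (H *ᵥ u) = u ⬝ᵥ w := by
        rw [dotProduct_mulVec, ← mulVec_transpose, dotProduct_comm]
      have hD : v ⬝ᵥ (((2 * (k - 1)) • (1 : Matrix (Fin n) (Fin n) ℝ)) *ᵥ v)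
          = 2 * (k - 1) * (v ⬝ᵥ v) := by
        rw [smul_mulVec, one_mulVec, dotProduct_smul, smul_eq_mul]
      rw [hcross, hD]
      ring
    rw [hquad]
    by_cases hv : v = 0
    · -- v = 0 : reduces to positive definiteness of H + Hᵀ
      have hu0 : u ≠ 0 := by
        intro h0
        apply hx
        funext i
        cases i with
        | inl a => exact congrFun h0 a
        | inr b => exact congrFun hv b
      have hw0 : w = 0 := by rw [hw_def, hv, mulVec_zero]
      have := hH.dotProduct_mulVec_pos hu0
      rw [star_trivial] at this
      rw [hw0, hv]
      simpa using this
    · -- v ≠ 0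
      have hvv : 0 < v ⬝ᵥ v := by
        have h1 : 0 ≤ v ⬝ᵥ v := Finset.sum_nonneg fun i _ => mul_self_nonneg _
        rcases h1.lt_or_eq with h | h
        · exact h
        · exfalso
          apply hv
          have := (dotProduct_self_eq_zero (v := v)).mp h.symm
          exact this
      have hS1 : lam * (u ⬝ᵥ u) ≤ u ⬝ᵥ ((H + Hᵀ) *ᵥ u) := aux_lb hH.1 hlam.2 u
      have hS2 : w ⬝ᵥ w ≤ μ * (v ⬝ᵥ v) := by
        have : w ⬝ᵥ w = v ⬝ᵥ ((H * Hᵀ) *ᵥ v) := by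
          rw [← mulVec_mulVec, dotProduct_mulVec, ← mulVec_transpose, transpose_transpose,
            dotProduct_comm, hw_def]
        rw [this]
        exact aux_ub hHHt hμ.2 v
      -- AM-GM style bound on the cross term
      have key : 0 ≤ lam * (u ⬝ᵥ u) + 2 * (u ⬝ᵥ w) + (1 / lam) * (w ⬝ᵥ w) := by
        set s := Real.sqrt lam with hs_def
        have hs0 : 0 < s := Real.sqrt_pos.mpr hlam0
        have hss : s * s = lam := Real.mul_self_sqrt hlam0.le
        set z : Fin n → ℝ := fun i => s * u i + w i / s with hz_def
        have h0 : 0 ≤ z ⬝ᵥ z := Finset.sum_nonneg fun i _ => mul_self_nonneg _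
        have hexp : z ⬝ᵥ z
            = lam * (u ⬝ᵥ u) + 2 * (u ⬝ᵥ w) + (1 / lam) * (w ⬝ᵥ w) := by
          simp only [dotProduct, hz_def, Finset.mul_sum, ← hss]
          rw [← Finset.sum_add_distrib, ← Finset.sum_add_distrib]
          apply Finset.sum_congr rfl
          intro i _
          field_simp
          ring
        linarith [hexp ▸ h0]
      have hμlt : μ < 2 * (k - 1) * lam := by
        have h2l : 0 < 2 * lam := by linarith
        have := (div_lt_iff₀ h2l).mp (by linarith : μ / (2 * lam) < k - 1)
        nlinarith
      have hfrac : (1 / lam) * (w ⬝ᵥ w) ≤ (1 / lam) * (μ * (v ⬝ᵥ v)) :=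
        mul_le_mul_of_nonneg_left hS2 (by positivity)
      have hfrac2 : (1 / lam) * (μ * (v ⬝ᵥ v)) < 2 * (k - 1) * (v ⬝ᵥ v) := by
        rw [div_mul_eq_mul_div, one_mul, div_lt_iff₀ hlam0]
        nlinarith
      linarith
end

section
/- Let H_1,…,H_N ∈ ℝ^{n×n} be a finite family of matrices such that H_p + H_pᵀ is positive definite for every p (as holds when H_p = L_p + B_p for balanced digraphs G_p in which node 0 is globally reachable in the augmented digraph Ḡ_p). Let λ̃ = min over p of the smallest eigenvalue of H_p + H_pᵀ and μ̃ = max over p of the largest eigenvalue of H_pH_pᵀ, and fix k > k* = μ̃/(2λ̃) + 1. Then there exists τ > 0 such that for every switching signal σ : [0,∞) → {1,…,N}, every continuously differentiable delay r : [0,∞) → ℝ with 0 < r(t) < τ for all t ≥ 0, and every continuously differentiable ε : ℝ → ℝ^{2n} satisfying ε′(t) = Cε(t) + E_{σ(t)}ε(t − r(t)) for all t ≥ 0, where C = [[0, I_n],[0, −kI_n]] and E_p = [[0, 0],[−H_p, 0]], we have ε(t) → 0 as t → ∞. -/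
open Matrix Filter Set Pointwise

-- ===== auxiliary lemmas =====

lemma aux_abs2 {u S : ℝ} (hS : 0 ≤ S) (h : u^2 ≤ S^2) : -S ≤ u ∧ u ≤ S := by
  have h1 : |u| ≤ S := by
    have h2 := Real.sqrt_le_sqrt h
    rwa [Real.sqrt_sq_eq_abs, Real.sqrt_sq hS] at h2
  exact abs_le.mp h1

lemma form_ge_of_spectrum_lb {n : ℕ} (M : Matrix (Fin n) (Fin n) ℝ) (hM : M.IsHermitian)
    (c : ℝ) (hc : ∀ s ∈ spectrum ℝ M, c ≤ s) (x : Fin n → ℝ) :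
    c * (x ⬝ᵥ x) ≤ x ⬝ᵥ (M *ᵥ x) := by
  have halg : (c • (1 : Matrix (Fin n) (Fin n) ℝ)) = algebraMap ℝ _ c :=
    (Algebra.algebraMap_eq_smul_one c).symm
  have hset : spectrum ℝ (M - c • (1 : Matrix (Fin n) (Fin n) ℝ))
      = spectrum ℝ M - ({c} : Set ℝ) := by
    rw [halg, spectrum.sub_singleton_eq]
  have hherm : (M - c • (1 : Matrix (Fin n) (Fin n) ℝ)).IsHermitian := by
    refine hM.sub ?_
    simp [Matrix.IsHermitian, Matrix.conjTranspose_smul]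
  have hB : (M - c • (1 : Matrix (Fin n) (Fin n) ℝ)).PosSemidef := by
    refine hherm.posSemidef_iff_eigenvalues_nonneg.mpr (fun i => ?_)
    have hmem := hherm.eigenvalues_mem_spectrum_real i
    rw [hset] at hmem
    obtain ⟨s, hs, y, hy, hxy⟩ := hmem
    simp only [Set.mem_singleton_iff] at hy
    subst hy
    have := hc s hs
    rw [← hxy]
    dsimp only [Pi.zero_apply]
    linarith
  have := hB.dotProduct_mulVec_nonneg x
  simp only [Matrix.sub_mulVec, Matrix.smul_mulVec, Matrix.one_mulVec,
    dotProduct_sub, dotProduct_smul, star_trivial, RCLike.re_to_real, smul_eq_mul] at this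
  linarith

lemma form_le_of_spectrum_ub {n : ℕ} (M : Matrix (Fin n) (Fin n) ℝ) (hM : M.IsHermitian)
    (c : ℝ) (hc : ∀ s ∈ spectrum ℝ M, s ≤ c) (x : Fin n → ℝ) :
    x ⬝ᵥ (M *ᵥ x) ≤ c * (x ⬝ᵥ x) := by
  have h := form_ge_of_spectrum_lb (-M) (by simpa [Matrix.IsHermitian] using hM.neg) (-c)
    (fun s hs => ?_) x
  · have heq : x ⬝ᵥ ((-M) *ᵥ x) = -(x ⬝ᵥ (M *ᵥ x)) := by simp [Matrix.neg_mulVec]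
    rw [heq] at h
    linarith
  · have hmem : -s ∈ spectrum ℝ M := by
      have hneg := spectrum.neg_eq (R := ℝ) M
      rw [← hneg] at hs
      simpa using hs
    have := hc _ hmem
    linarith

open Filter Set
set_option maxHeartbeats 1000000 in

lemma halanay (V : ℝ → ℝ) (hVc : Continuous V) (hV0 : ∀ t, 0 ≤ V t)
    (hVd : ∀ t, DifferentiableAt ℝ V t)
    (a b δ t₁ : ℝ) (ha : 0 < a) (hb : 0 ≤ b) (hba : b < a) (hδ : 0 < δ)
    (hineq : ∀ t, t₁ ≤ t → deriv V t ≤ -a * V t + b * sSup (V '' Set.Icc (t - δ) t)) :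
    Tendsto V atTop (nhds 0) := by
  set M : ℝ → ℝ := fun t => sSup (V '' Set.Icc (t - δ) t) with hM
  have hMle : ∀ t, ∀ s ∈ Set.Icc (t - δ) t, V s ≤ M t := by
    intro t s hs
    exact le_csSup ((isCompact_Icc.image_of_continuousOn hVc.continuousOn).bddAbove)
      (Set.mem_image_of_mem V hs)
  have hM0 : ∀ t, 0 ≤ M t := fun t =>
    (hV0 t).trans (hMle t t ⟨by linarith, le_rfl⟩)
  -- Step A
  have stepA : ∀ t₀, t₁ ≤ t₀ → ∀ t, t₀ ≤ t → V t ≤ M t₀ := by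
    intro t₀ h10 t h0t
    by_contra hlt
    push_neg at hlt
    set B := (M t₀ + V t) / 2 with hBdef
    have hB1 : M t₀ < B := by rw [hBdef]; linarith
    have hB2 : B < V t := by rw [hBdef]; linarith
    have hBpos : 0 < B := lt_of_le_of_lt (hM0 t₀) hB1
    set S := {s : ℝ | s ∈ Set.Icc t₀ t ∧ B ≤ V s} with hS
    have hSne : S.Nonempty := ⟨t, ⟨⟨h0t, le_rfl⟩, hB2.le⟩⟩
    have hScl : IsClosed S := by
      have : S = Set.Icc t₀ t ∩ V ⁻¹' (Set.Ici B) := rfl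
      rw [this]
      exact isClosed_Icc.inter (isClosed_Ici.preimage hVc)
    have hSbd : BddBelow S := ⟨t₀, fun s hs => hs.1.1⟩
    set c := sInf S with hc
    have hcS : c ∈ S := hScl.csInf_mem hSne hSbd
    have hVt₀ : V t₀ ≤ M t₀ := hMle t₀ t₀ ⟨by linarith, le_rfl⟩
    have hct0 : t₀ < c := by
      rcases lt_or_eq_of_le hcS.1.1 with h | h
      · exact h
      · exfalso; have := hcS.2; rw [← h] at this; linarith
    have hlow : ∀ s, t₀ ≤ s → s < c → V s < B := by
      intro s h1 h2
      by_contra h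
      push_neg at h
      have : c ≤ s := csInf_le hSbd ⟨⟨h1, le_trans h2.le hcS.1.2⟩, h⟩
      linarith
    have hVcge : B ≤ V c := hcS.2
    have hMc : M c ≤ V c := by
      apply csSup_le (Set.Nonempty.image _ (Set.nonempty_Icc.mpr (by linarith)))
      rintro v ⟨s, hs, rfl⟩
      rcases le_or_gt s t₀ with h | h
      · have : V s ≤ M t₀ := hMle t₀ s ⟨by cases hs with | intro h1 h2 => linarith, h⟩
        linarith
      · rcases lt_or_eq_of_le hs.2 with h2 | h2
        · exact (hlow s h.le h2).le.trans hVcge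
        · rw [h2]
    have hdneg : deriv V c < 0 := by
      have h1 := hineq c (le_trans h10 hcS.1.1)
      have h2 : b * M c ≤ b * V c := mul_le_mul_of_nonneg_left hMc hb
      have h1' : deriv V c ≤ -a * V c + b * M c := h1
      have : deriv V c ≤ (b - a) * V c := by nlinarith
      have : (b - a) * V c < 0 := mul_neg_of_neg_of_pos (by linarith) (by linarith)
      linarith
    have hd := (hVd c).hasDerivAt
    rw [hasDerivAt_iff_tendsto_slope] at hd
    have hmono : Tendsto (slope V c) (nhdsWithin c (Set.Iio c)) (nhds (deriv V c)) :=
      hd.mono_left (nhdsWithin_mono c (fun y hy => ne_of_lt hy))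
    have hev : ∀ᶠ s in nhdsWithin c (Set.Iio c), 0 ≤ slope V c s := by
      filter_upwards [Ioo_mem_nhdsLT_of_mem ⟨hct0, le_rfl⟩] with s hs
      have h1 : V s < B := hlow s hs.1.le hs.2
      have h2 : V s - V c < 0 := by linarith
      have h3 : s - c < 0 := by linarith [hs.2]
      rw [slope_def_field]
      rw [div_nonneg_iff]
      right
      exact ⟨h2.le, h3.le⟩
    have : 0 ≤ deriv V c := ge_of_tendsto hmono hev
    linarith
  -- Step M : window sup is monotone after t₁
  have stepM : ∀ t₀, t₁ ≤ t₀ → ∀ t, t₀ ≤ t → M t ≤ M t₀ := by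
    intro t₀ h10 t h0t
    apply csSup_le (Set.Nonempty.image _ (Set.nonempty_Icc.mpr (by linarith)))
    rintro v ⟨s, hs, rfl⟩
    rcases le_or_gt s t₀ with h | h
    · exact hMle t₀ s ⟨by cases hs with | intro h1 h2 => linarith, h⟩
    · exact stepA t₀ h10 s h.le
  -- Step B : exponential comparison
  have stepB : ∀ t₀, t₁ ≤ t₀ → ∀ t, t₀ ≤ t →
      V t ≤ (b / a) * M t₀ + M t₀ * Real.exp (-(a * (t - t₀))) := by
    intro t₀ h10 t ht
    set c0 := (b / a) * M t₀ with hc0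
    have hc0nn : 0 ≤ c0 := mul_nonneg (div_nonneg hb ha.le) (hM0 t₀)
    set g : ℝ → ℝ := fun s => (V s - c0) * Real.exp (a * (s - t₀)) with hg
    have hgd : ∀ s : ℝ, HasDerivAt g
        ((deriv V s + a * (V s - c0)) * Real.exp (a * (s - t₀))) s := by
      intro s
      have h1 : HasDerivAt (fun u : ℝ => V u - c0) (deriv V s) s :=
        (hVd s).hasDerivAt.sub_const c0
      have h2 : HasDerivAt (fun u : ℝ => a * (u - t₀)) a s := by
        simpa using ((hasDerivAt_id s).sub_const t₀).const_mul a
      have h3 : HasDerivAt (fun u : ℝ => Real.exp (a * (u - t₀)))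
          (Real.exp (a * (s - t₀)) * a) s := (Real.hasDerivAt_exp _).comp s h2
      have := h1.fun_mul h3
      exact this.congr_deriv (by ring)
    have hanti : AntitoneOn g (Set.Ici t₀) := by
      apply antitoneOn_of_deriv_nonpos (convex_Ici t₀)
      · exact fun s _ => ((hgd s).continuousAt).continuousWithinAt
      · intro s _
        exact (hgd s).differentiableAt.differentiableWithinAt
      · intro s hs
        rw [interior_Ici] at hs
        rw [(hgd s).deriv]
        apply mul_nonpos_of_nonpos_of_nonneg _ (Real.exp_nonneg _)
        have h1 : deriv V s ≤ -a * V s + b * M s := hineq s (by linarith [hs.out])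
        have h2 : M s ≤ M t₀ := stepM t₀ h10 s (le_of_lt hs.out)
        have h3 : b * M s ≤ b * M t₀ := mul_le_mul_of_nonneg_left h2 hb
        have h4 : b * M t₀ = a * c0 := by
          rw [hc0]; field_simp
        nlinarith
    have hgg := hanti (Set.self_mem_Ici) (Set.mem_Ici.mpr ht) ht
    have hgt₀ : g t₀ ≤ M t₀ := by
      have h6 : g t₀ = (V t₀ - c0) * Real.exp (a * (t₀ - t₀)) := by rw [hg]
      have h5 : V t₀ ≤ M t₀ := hMle t₀ t₀ ⟨by linarith, le_rfl⟩
      rw [h6, sub_self, mul_zero, Real.exp_zero, mul_one]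
      linarith
    have hE : (0:ℝ) < Real.exp (a * (t - t₀)) := Real.exp_pos _
    have step : (V t - c0) * Real.exp (a * (t - t₀)) ≤ M t₀ := le_trans hgg hgt₀
    have : V t - c0 ≤ M t₀ * Real.exp (-(a * (t - t₀))) := by
      rw [Real.exp_neg, ← div_eq_mul_inv]
      exact (le_div_iff₀ hE).mpr step
    linarith
  -- Step C : geometric decay of window sups and conclusion
  have hba' : b / a < 1 := (div_lt_one ha).mpr hba
  have hbann : 0 ≤ b / a := div_nonneg hb ha.le
  obtain ⟨e0, he0⟩ : ∃ e0 : ℝ, e0 = (1 - b / a) / 2 := ⟨_, rfl⟩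
  have he0pos : 0 < e0 := by rw [he0]; linarith
  obtain ⟨T, hT⟩ : ∃ T : ℝ, T = (1 - Real.log e0) / a := ⟨_, rfl⟩
  have hexpT : Real.exp (-(a * T)) < e0 := by
    have hneg : -(a * T) = Real.log e0 - 1 := by rw [hT]; field_simp; ring
    rw [hneg]
    calc Real.exp (Real.log e0 - 1) < Real.exp (Real.log e0) := by
          apply Real.exp_lt_exp.mpr; linarith
      _ = e0 := Real.exp_log he0pos
  have hloge : Real.log e0 < 0 := Real.log_neg he0pos (by rw [he0]; linarith)
  have hTpos : 0 < T := by
    rw [hT]; exact div_pos (by linarith) ha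
  obtain ⟨q, hq⟩ : ∃ q : ℝ, q = b / a + Real.exp (-(a * T)) := ⟨_, rfl⟩
  have hq1 : q < 1 := by rw [hq]; rw [he0] at hexpT; linarith
  have hq0 : 0 ≤ q := by rw [hq]; exact add_nonneg hbann (Real.exp_nonneg _)
  obtain ⟨Δ, hΔ⟩ : ∃ Δ : ℝ, Δ = T + δ := ⟨_, rfl⟩
  have hΔpos : 0 < Δ := by rw [hΔ]; linarith
  obtain ⟨u, hu⟩ : ∃ u : ℕ → ℝ, u = fun j : ℕ => M (t₁ + ↑j * Δ) := ⟨_, rfl⟩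
  have huj : ∀ j : ℕ, u j = M (t₁ + ↑j * Δ) := fun j => by rw [hu]
  have hu0 : ∀ j : ℕ, 0 ≤ u j := fun j => by rw [huj]; exact hM0 _
  have hukey : ∀ j : ℕ, u (j + 1) ≤ q * u j := by
    intro j
    rw [huj, huj]
    apply csSup_le (Set.Nonempty.image _ (Set.nonempty_Icc.mpr (by linarith)))
    rintro v ⟨s, hs, rfl⟩
    have hjc : (0:ℝ) ≤ (j:ℝ) := Nat.cast_nonneg j
    have h1 : t₁ ≤ t₁ + ↑j * Δ := by nlinarith
    have h7 := hs.1
    push_cast at h7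
    have hsge : t₁ + ↑j * Δ + T ≤ s := by
      have h9 : ((j:ℝ) + 1) * Δ = ↑j * Δ + Δ := by ring
      linarith [hΔ]
    have h2 := stepB (t₁ + ↑j * Δ) h1 s (by linarith)
    have h3 : Real.exp (-(a * (s - (t₁ + ↑j * Δ)))) ≤ Real.exp (-(a * T)) :=
      Real.exp_le_exp.mpr (by nlinarith)
    calc V s ≤ b / a * M (t₁ + ↑j * Δ)
          + M (t₁ + ↑j * Δ) * Real.exp (-(a * (s - (t₁ + ↑j * Δ)))) := h2
      _ ≤ b / a * M (t₁ + ↑j * Δ) + M (t₁ + ↑j * Δ) * Real.exp (-(a * T)) := by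
          nlinarith [hM0 (t₁ + ↑j * Δ)]
      _ = q * M (t₁ + ↑j * Δ) := by rw [hq]; ring
  have hiter : ∀ j : ℕ, u j ≤ q ^ j * u 0 := by
    intro j
    induction j with
    | zero => simp
    | succ m ih =>
      calc u (m + 1) ≤ q * u m := hukey m
        _ ≤ q * (q ^ m * u 0) := mul_le_mul_of_nonneg_left ih hq0
        _ = q ^ (m + 1) * u 0 := by ring
  have hulim : Tendsto u atTop (nhds 0) := by
    have h0 : Tendsto (fun j : ℕ => q ^ j * u 0) atTop (nhds 0) := by
      simpa using (tendsto_pow_atTop_nhds_zero_of_lt_one hq0 hq1).mul_const (u 0)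
    exact squeeze_zero hu0 hiter h0
  rw [Metric.tendsto_atTop]
  intro εp hεp
  obtain ⟨j, hj⟩ := Metric.tendsto_atTop.mp hulim εp hεp
  refine ⟨t₁ + ↑j * Δ, fun t htj => ?_⟩
  have hjc : (0:ℝ) ≤ (j:ℝ) := Nat.cast_nonneg j
  have h1 : t₁ ≤ t₁ + ↑j * Δ := by nlinarith
  have h2 : V t ≤ u j := by rw [huj]; exact stepA (t₁ + ↑j * Δ) h1 t htj
  have h3 : dist (u j) 0 < εp := hj j le_rfl
  rw [Real.dist_eq, sub_zero] at h3 ⊢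
  rw [abs_of_nonneg (hV0 t)]
  rw [abs_of_nonneg (hu0 _)] at h3
  exact lt_of_le_of_lt h2 h3

set_option maxHeartbeats 1600000 in
/-- Let `H 1, …, H N` be a finite family of real `n×n` matrices with each
`H p + (H p)ᵀ` positive definite.  Let `λ̃` be the minimum over `p` of the
smallest eigenvalue of `H p + (H p)ᵀ` and `μ̃` the maximum over `p` of the
largest eigenvalue of `H p * (H p)ᵀ`, and fix `k > k* = μ̃/(2λ̃) + 1`.  Then
there exists `τ > 0` such that for every switching signal `σ`, every `C¹` delay
`r` with `0 < r(t) < τ` on `[0,∞)`, and every `C¹` solution of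
`ε′(t) = Cε(t) + E_{σ(t)}ε(t − r(t))` for `t ≥ 0`, where
`C = [[0, I],[0, −kI]]` and `E p = [[0, 0],[−H p, 0]]`, we have `ε(t) → 0`. -/
theorem switched_topology_leader_following_consensus
    {n N : ℕ} (H : Fin N → Matrix (Fin n) (Fin n) ℝ)
    (hH : ∀ p, (H p + (H p)ᵀ).PosDef)
    (lam μ k : ℝ)
    (hlam : IsLeast {x : ℝ | ∃ p, x ∈ spectrum ℝ (H p + (H p)ᵀ)} lam)
    (hμ : IsGreatest {x : ℝ | ∃ p, x ∈ spectrum ℝ (H p * (H p)ᵀ)} μ)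
    (hk : μ / (2 * lam) + 1 < k) :
    ∃ τ > (0 : ℝ), ∀ σ : ℝ → Fin N,
      ∀ r : ℝ → ℝ, ContDiffOn ℝ 1 r (Set.Ici 0) →
      (∀ t : ℝ, 0 ≤ t → 0 < r t ∧ r t < τ) →
      ∀ ε : ℝ → (Fin n ⊕ Fin n → ℝ), ContDiff ℝ 1 ε →
      (∀ t : ℝ, 0 ≤ t →
        deriv ε t =
          (Matrix.fromBlocks (0 : Matrix (Fin n) (Fin n) ℝ) 1 0
              (-(k • (1 : Matrix (Fin n) (Fin n) ℝ)))).mulVec (ε t) +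
            (Matrix.fromBlocks (0 : Matrix (Fin n) (Fin n) ℝ) 0 (-(H (σ t))) 0).mulVec
              (ε (t - r t))) →
      Filter.Tendsto ε Filter.atTop (nhds 0) := by
  classical
  -- positivity of lam
  have lam_pos : 0 < lam := by
    obtain ⟨p, hp⟩ := hlam.1
    have hherm : (H p + (H p)ᵀ).IsHermitian := (hH p).isHermitian
    rw [hherm.spectrum_real_eq_range_eigenvalues] at hp
    obtain ⟨i, hi⟩ := hp
    have hpos := (hH p).eigenvalues_pos i
    rw [hi] at hpos
    exact hpos
  -- nonnegativity of μ
  have psd : ∀ p, (H p * (H p)ᵀ).PosSemidef := by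
    intro p
    have h1 := Matrix.posSemidef_self_mul_conjTranspose (H p)
    rwa [Matrix.conjTranspose_eq_transpose_of_trivial] at h1
  have mu_nonneg : 0 ≤ μ := by
    obtain ⟨p, hp⟩ := hμ.1
    rw [(psd p).isHermitian.spectrum_real_eq_range_eigenvalues] at hp
    obtain ⟨i, hi⟩ := hp
    have h2 := (psd p).eigenvalues_nonneg i
    rw [hi] at h2
    exact h2
  -- quadratic form bounds
  have Lem1 : ∀ p (x : Fin n → ℝ), lam * (x ⬝ᵥ x) ≤ x ⬝ᵥ ((H p + (H p)ᵀ) *ᵥ x) :=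
    fun p x => form_ge_of_spectrum_lb _ (hH p).isHermitian lam (fun s hs => hlam.2 ⟨p, hs⟩) x
  have Lem2 : ∀ p (x : Fin n → ℝ), ((H p) *ᵥ x) ⬝ᵥ ((H p) *ᵥ x) ≤ μ * (x ⬝ᵥ x) := by
    intro p x
    have hherm : ((H p)ᵀ * H p).IsHermitian := by
      have h1 := Matrix.isHermitian_conjTranspose_mul_self (H p)
      rwa [Matrix.conjTranspose_eq_transpose_of_trivial] at h1
    have hub : ∀ s ∈ spectrum ℝ ((H p)ᵀ * H p), s ≤ μ := by
      intro s hs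
      by_cases hs0 : s = 0
      · rw [hs0]; exact mu_nonneg
      · have hmem : s ∈ spectrum ℝ (H p * (H p)ᵀ) := by
          have hset := spectrum.nonzero_mul_comm (𝕜 := ℝ) ((H p)ᵀ) (H p)
          have h3 : s ∈ spectrum ℝ ((H p)ᵀ * H p) \ {0} := ⟨hs, hs0⟩
          rw [hset] at h3
          exact h3.1
        exact hμ.2 ⟨p, hmem⟩
    have h2 := form_le_of_spectrum_ub _ hherm μ hub x
    calc ((H p) *ᵥ x) ⬝ᵥ ((H p) *ᵥ x)
        = x ⬝ᵥ (((H p)ᵀ * H p) *ᵥ x) := by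
          rw [← Matrix.mulVec_mulVec, Matrix.dotProduct_mulVec x,
            Matrix.vecMul_transpose, dotProduct_comm]
      _ ≤ μ * (x ⬝ᵥ x) := h2
  -- basic constants
  have k_pos : 0 < k := by
    have h1 : 0 ≤ μ / (2 * lam) := div_nonneg mu_nonneg (by linarith)
    linarith
  have key2 : 2 * μ < k ^ 2 * lam := by
    have hs0 : 0 ≤ μ / (2 * lam) := div_nonneg mu_nonneg (by linarith)
    have hseq : μ / (2 * lam) * (2 * lam) = μ := by field_simp
    have h1 : (μ / (2 * lam) + 1) ^ 2 ≥ 4 * (μ / (2 * lam)) := by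
      nlinarith [sq_nonneg (μ / (2 * lam) - 1)]
    have h2 : k ^ 2 > (μ / (2 * lam) + 1) ^ 2 := by nlinarith
    have h3 : k ^ 2 > 4 * (μ / (2 * lam)) := by linarith
    nlinarith [mul_lt_mul_of_pos_right h3 lam_pos]
  have hS : (0:ℝ) < k + k * lam / 2 := by nlinarith
  have hNum : 0 < k ^ 2 * lam / 2 - μ := by nlinarith
  obtain ⟨α, hα⟩ : ∃ α : ℝ, α = (k ^ 2 * lam / 2 - μ) / (2 * (k + k * lam / 2) + 1) := ⟨_, rfl⟩
  have hden : (0:ℝ) < 2 * (k + k * lam / 2) + 1 := by linarith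
  have hαpos : 0 < α := by rw [hα]; exact div_pos hNum hden
  have hαeq : α * (2 * (k + k * lam / 2) + 1) = k ^ 2 * lam / 2 - μ := by
    rw [hα]; field_simp
  have hα1 : 2 * α * (k + k * lam / 2) ≤ k ^ 2 * lam / 2 - μ := by nlinarith
  have coeff1 : 0 ≤ k - 2 * α := by
    have h5 : 2 * α * (k + k * lam / 2) ≤ k * (k + k * lam / 2) := by nlinarith
    exact sub_nonneg.mpr (le_of_mul_le_mul_right h5 hS)
  have coeff2 : 0 ≤ k * lam / 2 - 2 * α := by
    have h5 : 2 * α * (k + k * lam / 2) ≤ (k * lam / 2) * (k + k * lam / 2) := by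
      nlinarith [sq_nonneg (k * lam)]
    exact sub_nonneg.mpr (le_of_mul_le_mul_right h5 hS)
  have prodge : μ ≤ (k - 2 * α) * (k * lam / 2 - 2 * α) := by nlinarith [sq_nonneg α]
  -- the quadratic comparison constants
  obtain ⟨p₁, hp₁⟩ : ∃ p₁ : ℝ, p₁ = (k ^ 2 / 4) / (k ^ 2 / 2 + 1) := ⟨_, rfl⟩
  obtain ⟨p₂, hp₂⟩ : ∃ p₂ : ℝ, p₂ = k ^ 2 / 2 + k / 2 + 1 := ⟨_, rfl⟩
  have hk2 : 0 < k ^ 2 := pow_pos k_pos 2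
  have hp₁pos : 0 < p₁ := by rw [hp₁]; exact div_pos (by linarith) (by linarith)
  have hp₂pos : 0 < p₂ := by rw [hp₂]; nlinarith
  have hp₁eq : p₁ * (k ^ 2 / 2 + 1) = k ^ 2 / 4 := by rw [hp₁]; field_simp
  have hA : p₁ ≤ k ^ 2 / 2 := by nlinarith
  have hB : p₁ ≤ 1 := by nlinarith
  have hquad : ∀ X Y G : ℝ, 0 ≤ X → 0 ≤ Y → G ^ 2 ≤ X * Y →
      p₁ * (X + Y) ≤ k ^ 2 / 2 * X + Y + k * G ∧
      k ^ 2 / 2 * X + Y + k * G ≤ p₂ * (X + Y) := by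
    intro X Y G hX hY hG
    have hprod : k ^ 2 ≤ 4 * ((k ^ 2 / 2 - p₁) * (1 - p₁)) := by nlinarith [sq_nonneg p₁]
    constructor
    · have hSnn : 0 ≤ (k ^ 2 / 2 - p₁) * X + (1 - p₁) * Y :=
        add_nonneg (mul_nonneg (by linarith) hX) (mul_nonneg (by linarith) hY)
      have hkey : (k * G) ^ 2 ≤ ((k ^ 2 / 2 - p₁) * X + (1 - p₁) * Y) ^ 2 := by
        nlinarith [sq_nonneg ((k ^ 2 / 2 - p₁) * X - (1 - p₁) * Y),
          mul_le_mul_of_nonneg_left hG (sq_nonneg k), mul_nonneg hX hY]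
      have := (aux_abs2 hSnn hkey).1
      linarith
    · have hSnn : 0 ≤ k * (X + Y) / 2 := by positivity
      have hkey : (k * G) ^ 2 ≤ (k * (X + Y) / 2) ^ 2 := by
        nlinarith [sq_nonneg (X - Y), mul_le_mul_of_nonneg_left hG (sq_nonneg k),
          mul_nonneg hX hY]
      have := (aux_abs2 hSnn hkey).2
      rw [hp₂]
      nlinarith
  -- decay rate and delay-gain constants
  obtain ⟨a, ha⟩ : ∃ a : ℝ, a = 2 * α / p₂ := ⟨_, rfl⟩
  have hapos : 0 < a := by rw [ha]; exact div_pos (by linarith) hp₂pos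
  obtain ⟨K, hK⟩ : ∃ K : ℝ, K = (2 + k) * Real.sqrt (μ * (n:ℝ)) / p₁ := ⟨_, rfl⟩
  have hKnn : 0 ≤ K := by
    rw [hK]
    exact div_nonneg (mul_nonneg (by linarith) (Real.sqrt_nonneg _)) hp₁pos.le
  obtain ⟨τ, hτ⟩ : ∃ τ : ℝ, τ = a / (2 * (K + 1)) := ⟨_, rfl⟩
  have hτpos : 0 < τ := by rw [hτ]; exact div_pos hapos (by linarith)
  have hτeq : τ * (2 * (K + 1)) = a := by rw [hτ]; field_simp
  have hblt : K * τ < a := by nlinarith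
  have hbnn : 0 ≤ K * τ := mul_nonneg hKnn hτpos.le
  refine ⟨τ, hτpos, ?_⟩
  intro σ r hr hrb ε hε hode
  -- coordinate derivative facts
  have hεdiff : Differentiable ℝ ε := hε.differentiable one_ne_zero
  have hcd : ∀ (j : Fin n ⊕ Fin n) (s : ℝ), HasDerivAt (fun u => ε u j) (deriv ε s j) s := by
    intro j s
    exact (ContinuousLinearMap.proj (R := ℝ) (φ := fun _ : Fin n ⊕ Fin n => ℝ)
      j).hasFDerivAt.comp_hasDerivAt s (hεdiff s).hasDerivAt
  have hccoord : ∀ j, Continuous fun u : ℝ => ε u j :=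
    fun j => (continuous_apply j).comp hε.continuous
  have hdcont : Continuous (deriv ε) := hε.continuous_deriv le_rfl
  have hdcoord : ∀ j, Continuous fun u : ℝ => deriv ε u j :=
    fun j => (continuous_apply j).comp hdcont
  -- block structure of the ODE
  have hblock : ∀ t : ℝ, 0 ≤ t → deriv ε t = Sum.elim (fun i => ε t (Sum.inr i))
      (fun i => -(k * ε t (Sum.inr i))
        - ((H (σ t)) *ᵥ (fun i' => ε (t - r t) (Sum.inl i'))) i) := by
    intro t ht
    rw [hode t ht]
    conv_lhs => rw [← Sum.elim_comp_inl_inr (ε t), ← Sum.elim_comp_inl_inr (ε (t - r t))]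
    rw [Matrix.fromBlocks_mulVec, Matrix.fromBlocks_mulVec]
    funext j
    cases j with
    | inl i =>
      simp [Matrix.zero_mulVec, Matrix.one_mulVec, Function.comp]
    | inr i =>
      simp [Matrix.zero_mulVec, Matrix.neg_mulVec, Matrix.smul_mulVec,
        Matrix.one_mulVec, Function.comp, sub_eq_add_neg]
      rfl
  have hodel : ∀ t : ℝ, 0 ≤ t → ∀ i, deriv ε t (Sum.inl i) = ε t (Sum.inr i) := by
    intro t ht i; rw [hblock t ht]; rfl
  have hoder : ∀ t : ℝ, 0 ≤ t → ∀ i, deriv ε t (Sum.inr i)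
      = -(k * ε t (Sum.inr i))
        - ((H (σ t)) *ᵥ (fun i' => ε (t - r t) (Sum.inl i'))) i := by
    intro t ht i; rw [hblock t ht]; rfl
  -- the Lyapunov function
  obtain ⟨V, hVdef⟩ : ∃ V : ℝ → ℝ, V = fun s =>
      k ^ 2 / 2 * (∑ i, ε s (Sum.inl i) * ε s (Sum.inl i)) +
      (∑ i, ε s (Sum.inr i) * ε s (Sum.inr i)) +
      k * (∑ i, ε s (Sum.inl i) * ε s (Sum.inr i)) := ⟨_, rfl⟩
  have hVder : ∀ s : ℝ, HasDerivAt V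
      (k ^ 2 / 2 * (∑ i, (deriv ε s (Sum.inl i) * ε s (Sum.inl i)
          + ε s (Sum.inl i) * deriv ε s (Sum.inl i))) +
       (∑ i, (deriv ε s (Sum.inr i) * ε s (Sum.inr i)
          + ε s (Sum.inr i) * deriv ε s (Sum.inr i))) +
       k * (∑ i, (deriv ε s (Sum.inl i) * ε s (Sum.inr i)
          + ε s (Sum.inl i) * deriv ε s (Sum.inr i)))) s := by
    intro s
    rw [hVdef]
    exact (((HasDerivAt.fun_sum
        (fun i _ => (hcd (Sum.inl i) s).fun_mul (hcd (Sum.inl i) s))).const_mul _).fun_add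
      (HasDerivAt.fun_sum (fun i _ => (hcd (Sum.inr i) s).fun_mul (hcd (Sum.inr i) s)))).fun_add
      ((HasDerivAt.fun_sum (fun i _ => (hcd (Sum.inl i) s).fun_mul (hcd (Sum.inr i) s))).const_mul _)
  have hXnn : ∀ s : ℝ, 0 ≤ ∑ i, ε s (Sum.inl i) * ε s (Sum.inl i) :=
    fun s => Finset.sum_nonneg (fun i _ => mul_self_nonneg _)
  have hYnn : ∀ s : ℝ, 0 ≤ ∑ i, ε s (Sum.inr i) * ε s (Sum.inr i) :=
    fun s => Finset.sum_nonneg (fun i _ => mul_self_nonneg _)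
  have hCS : ∀ f g : Fin n → ℝ,
      (∑ i, f i * g i) ^ 2 ≤ (∑ i, f i * f i) * (∑ i, g i * g i) := by
    intro f g
    have h1 := Finset.sum_mul_sq_le_sq_mul_sq Finset.univ f g
    simpa [pow_two] using h1
  have hVlb : ∀ s : ℝ, p₁ * ((∑ i, ε s (Sum.inl i) * ε s (Sum.inl i))
      + (∑ i, ε s (Sum.inr i) * ε s (Sum.inr i))) ≤ V s := by
    intro s; rw [hVdef]
    exact (hquad _ _ _ (hXnn s) (hYnn s) (hCS _ _)).1
  have hVub : ∀ s : ℝ, V s ≤ p₂ * ((∑ i, ε s (Sum.inl i) * ε s (Sum.inl i))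
      + (∑ i, ε s (Sum.inr i) * ε s (Sum.inr i))) := by
    intro s; rw [hVdef]
    exact (hquad _ _ _ (hXnn s) (hYnn s) (hCS _ _)).2
  have hV0 : ∀ s : ℝ, 0 ≤ V s := fun s =>
    le_trans (mul_nonneg hp₁pos.le (add_nonneg (hXnn s) (hYnn s))) (hVlb s)
  have hVcont : Continuous V := by
    rw [hVdef]
    exact ((continuous_const.mul (continuous_finset_sum _
        (fun i _ => (hccoord _).mul (hccoord _)))).add
      (continuous_finset_sum _ (fun i _ => (hccoord _).mul (hccoord _)))).add
      (continuous_const.mul (continuous_finset_sum _ (fun i _ => (hccoord _).mul (hccoord _))))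
  have hVdiff : ∀ s : ℝ, DifferentiableAt ℝ V s := fun s => (hVder s).differentiableAt
  -- the master differential inequality
  have hineq : ∀ t, τ ≤ t →
      deriv V t ≤ -a * V t + (K * τ) * sSup (V '' Set.Icc (t - τ) t) := by
    intro t ht
    have ht0 : (0:ℝ) ≤ t := le_trans hτpos.le ht
    obtain ⟨hrpos, hrlt⟩ := hrb t ht0
    obtain ⟨W, hW⟩ : ∃ W : ℝ, W = sSup (V '' Set.Icc (t - τ) t) := ⟨_, rfl⟩
    rw [← hW]
    have hVleW : ∀ s ∈ Set.Icc (t - τ) t, V s ≤ W := by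
      intro s hs
      rw [hW]
      exact le_csSup ((isCompact_Icc.image_of_continuousOn hVcont.continuousOn).bddAbove)
        (Set.mem_image_of_mem V hs)
    have hWnn : 0 ≤ W := le_trans (hV0 t) (hVleW t ⟨by linarith, le_rfl⟩)
    have hWp : 0 ≤ W / p₁ := div_nonneg hWnn hp₁pos.le
    have hyW : ∀ s ∈ Set.Icc (t - τ) t, ∀ i, (ε s (Sum.inr i)) ^ 2 ≤ W / p₁ := by
      intro s hs i
      have h1 : ε s (Sum.inr i) * ε s (Sum.inr i)
          ≤ ∑ i', ε s (Sum.inr i') * ε s (Sum.inr i') :=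
        Finset.single_le_sum (f := fun i' => ε s (Sum.inr i') * ε s (Sum.inr i'))
          (fun i' _ => mul_self_nonneg _) (Finset.mem_univ i)
      have h2 := hVlb s
      have h3 := hVleW s hs
      rw [pow_two, le_div_iff₀ hp₁pos]
      have h5 := mul_le_mul_of_nonneg_left h1 hp₁pos.le
      have h6 : 0 ≤ p₁ * (∑ i', ε s (Sum.inl i') * ε s (Sum.inl i')) :=
        mul_nonneg hp₁pos.le (hXnn s)
      linarith only [h2, h3, h5, h6]
    -- abbreviations
    obtain ⟨w0, hw0⟩ : ∃ w0 : Fin n → ℝ, w0 = fun i => ε (t - r t) (Sum.inl i) := ⟨_, rfl⟩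
    obtain ⟨Hw, hHw⟩ : ∃ Hw : Fin n → ℝ, Hw = (H (σ t)) *ᵥ w0 := ⟨_, rfl⟩
    obtain ⟨Hx, hHx⟩ : ∃ Hx : Fin n → ℝ,
      Hx = (H (σ t)) *ᵥ (fun i => ε t (Sum.inl i)) := ⟨_, rfl⟩
    obtain ⟨d0, hd0⟩ : ∃ d0 : Fin n → ℝ, d0 = (fun i => ε t (Sum.inl i)) - w0 := ⟨_, rfl⟩
    obtain ⟨Hd, hHd⟩ : ∃ Hd : Fin n → ℝ, Hd = (H (σ t)) *ᵥ d0 := ⟨_, rfl⟩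
    have hoder' : ∀ i, deriv ε t (Sum.inr i) = -(k * ε t (Sum.inr i)) - Hw i := by
      intro i
      rw [hoder t ht0 i, ← hw0, ← hHw]
    -- derivative identity
    have s1 : ∑ i, (deriv ε t (Sum.inl i) * ε t (Sum.inl i)
        + ε t (Sum.inl i) * deriv ε t (Sum.inl i))
        = 2 * ∑ i, ε t (Sum.inl i) * ε t (Sum.inr i) := by
      rw [Finset.mul_sum]
      refine Finset.sum_congr rfl (fun i _ => ?_)
      rw [hodel t ht0 i]; ring
    have s2 : ∑ i, (deriv ε t (Sum.inr i) * ε t (Sum.inr i)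
        + ε t (Sum.inr i) * deriv ε t (Sum.inr i))
        = -(2 * k) * (∑ i, ε t (Sum.inr i) * ε t (Sum.inr i))
          - 2 * (∑ i, ε t (Sum.inr i) * Hw i) := by
      have h1 : ∀ i : Fin n, deriv ε t (Sum.inr i) * ε t (Sum.inr i)
          + ε t (Sum.inr i) * deriv ε t (Sum.inr i)
          = -(2 * k) * (ε t (Sum.inr i) * ε t (Sum.inr i))
            - 2 * (ε t (Sum.inr i) * Hw i) := by
        intro i; rw [hoder' i]; ring
      rw [Finset.sum_congr rfl (fun i _ => h1 i), Finset.sum_sub_distrib,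
        ← Finset.mul_sum, ← Finset.mul_sum]
    have s3 : ∑ i, (deriv ε t (Sum.inl i) * ε t (Sum.inr i)
        + ε t (Sum.inl i) * deriv ε t (Sum.inr i))
        = (∑ i, ε t (Sum.inr i) * ε t (Sum.inr i))
          - k * (∑ i, ε t (Sum.inl i) * ε t (Sum.inr i))
          - (∑ i, ε t (Sum.inl i) * Hw i) := by
      have h1 : ∀ i : Fin n, deriv ε t (Sum.inl i) * ε t (Sum.inr i)
          + ε t (Sum.inl i) * deriv ε t (Sum.inr i)
          = (ε t (Sum.inr i) * ε t (Sum.inr i)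
            - k * (ε t (Sum.inl i) * ε t (Sum.inr i))) - ε t (Sum.inl i) * Hw i := by
        intro i; rw [hodel t ht0 i, hoder' i]; ring
      rw [Finset.sum_congr rfl (fun i _ => h1 i), Finset.sum_sub_distrib,
        Finset.sum_sub_distrib, ← Finset.mul_sum]
    have E1 : deriv V t = -k * (∑ i, ε t (Sum.inr i) * ε t (Sum.inr i))
        - 2 * (∑ i, ε t (Sum.inr i) * Hw i)
        - k * (∑ i, ε t (Sum.inl i) * Hw i) := by
      rw [(hVder t).deriv, s1, s2, s3]; ring
    -- splitting the delayed term
    have hsplitv : Hw = Hx - Hd := by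
      rw [hHw, hHx, hHd, hd0, Matrix.mulVec_sub]
      funext i
      simp
    have hsum_split : ∀ v : Fin n → ℝ,
        (∑ i, v i * Hw i) = (∑ i, v i * Hx i) - (∑ i, v i * Hd i) := by
      intro v
      rw [hsplitv, ← Finset.sum_sub_distrib]
      refine Finset.sum_congr rfl (fun i _ => ?_)
      simp [Pi.sub_apply]; ring
    -- abstract scalar quantities
    obtain ⟨X, hXe⟩ : ∃ X : ℝ, X = ∑ i, ε t (Sum.inl i) * ε t (Sum.inl i) := ⟨_, rfl⟩
    obtain ⟨Y, hYe⟩ : ∃ Y : ℝ, Y = ∑ i, ε t (Sum.inr i) * ε t (Sum.inr i) := ⟨_, rfl⟩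
    obtain ⟨Sxx, hSxxe⟩ : ∃ S : ℝ, S = ∑ i, ε t (Sum.inl i) * Hx i := ⟨_, rfl⟩
    obtain ⟨Syx, hSyxe⟩ : ∃ S : ℝ, S = ∑ i, ε t (Sum.inr i) * Hx i := ⟨_, rfl⟩
    obtain ⟨Sxd, hSxde⟩ : ∃ S : ℝ, S = ∑ i, ε t (Sum.inl i) * Hd i := ⟨_, rfl⟩
    obtain ⟨Syd, hSyde⟩ : ∃ S : ℝ, S = ∑ i, ε t (Sum.inr i) * Hd i := ⟨_, rfl⟩
    have hXnn' : 0 ≤ X := by rw [hXe]; exact hXnn t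
    have hYnn' : 0 ≤ Y := by rw [hYe]; exact hYnn t
    have E1' : deriv V t = -k * Y - 2 * (Syx - Syd) - k * (Sxx - Sxd) := by
      rw [E1, hsum_split, hsum_split, ← hYe, ← hSyxe, ← hSyde, ← hSxxe, ← hSxde]
    -- spectral bounds
    have hSxx' : lam / 2 * X ≤ Sxx := by
      rw [hXe, hSxxe]
      have h1 := Lem1 (σ t) (fun i => ε t (Sum.inl i))
      have h3 : (fun i => ε t (Sum.inl i)) ⬝ᵥ ((H (σ t))ᵀ *ᵥ (fun i => ε t (Sum.inl i)))
          = (fun i => ε t (Sum.inl i)) ⬝ᵥ ((H (σ t)) *ᵥ (fun i => ε t (Sum.inl i))) := by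
        rw [Matrix.dotProduct_mulVec, Matrix.vecMul_transpose, dotProduct_comm]
      rw [Matrix.add_mulVec, dotProduct_add, h3, ← hHx] at h1
      have h4 : (fun i => ε t (Sum.inl i)) ⬝ᵥ Hx = ∑ i, ε t (Sum.inl i) * Hx i := rfl
      have h5 : (fun i => ε t (Sum.inl i)) ⬝ᵥ (fun i => ε t (Sum.inl i))
          = ∑ i, ε t (Sum.inl i) * ε t (Sum.inl i) := rfl
      rw [h4, h5] at h1
      linarith
    have hHxHx : (∑ i, Hx i * Hx i) ≤ μ * X := by
      rw [hXe]
      have h1 := Lem2 (σ t) (fun i => ε t (Sum.inl i))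
      rw [← hHx] at h1
      exact h1
    have hSyx2 : Syx ^ 2 ≤ Y * (μ * X) := by
      rw [hSyxe, hYe]
      exact le_trans (hCS _ _) (mul_le_mul_of_nonneg_left hHxHx (hYnn t))
    -- main negativity estimate
    have hmain : -k * Y - 2 * Syx - k * Sxx ≤ -(2 * α) * (X + Y) := by
      have hSnn : 0 ≤ (k - 2 * α) * Y + (k * lam / 2 - 2 * α) * X :=
        add_nonneg (mul_nonneg coeff1 hYnn') (mul_nonneg coeff2 hXnn')
      have h8 := mul_le_mul_of_nonneg_right prodge (mul_nonneg hXnn' hYnn')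
      have hkey : (2 * Syx) ^ 2 ≤ ((k - 2 * α) * Y + (k * lam / 2 - 2 * α) * X) ^ 2 := by
        linarith only [hSyx2, h8,
          sq_nonneg ((k - 2 * α) * Y - (k * lam / 2 - 2 * α) * X)]
      have h6 := (aux_abs2 hSnn hkey).1
      have h7 := mul_le_mul_of_nonneg_left hSxx' k_pos.le
      linarith only [h6, h7]
    -- window bounds at time t
    have hXW : X ≤ W / p₁ := by
      rw [hXe]
      have h2 := hVlb t
      have h3 := hVleW t ⟨by linarith, le_rfl⟩
      rw [le_div_iff₀ hp₁pos]
      have h6 : 0 ≤ p₁ * (∑ i, ε t (Sum.inr i) * ε t (Sum.inr i)) :=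
        mul_nonneg hp₁pos.le (hYnn t)
      linarith only [h2, h3, h6]
    have hYW : Y ≤ W / p₁ := by
      rw [hYe]
      have h2 := hVlb t
      have h3 := hVleW t ⟨by linarith, le_rfl⟩
      rw [le_div_iff₀ hp₁pos]
      have h6 : 0 ≤ p₁ * (∑ i, ε t (Sum.inl i) * ε t (Sum.inl i)) :=
        mul_nonneg hp₁pos.le (hXnn t)
      linarith only [h2, h3, h6]
    -- the delay (integral) bound
    have hdb : ∀ i, |d0 i| ≤ τ * Real.sqrt (W / p₁) := by
      intro i
      have hle : t - r t ≤ t := by linarith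
      have heqf : (fun s => deriv ε s (Sum.inl i)) = deriv (fun u => ε u (Sum.inl i)) :=
        funext fun s => ((hcd (Sum.inl i) s).deriv).symm
      have hFTC : (∫ s in (t - r t)..t, deriv ε s (Sum.inl i))
          = ε t (Sum.inl i) - ε (t - r t) (Sum.inl i) := by
        rw [heqf]
        exact intervalIntegral.integral_deriv_eq_sub
          (fun x _ => (hcd (Sum.inl i) x).differentiableAt)
          (by rw [← heqf]; exact (hdcoord (Sum.inl i)).intervalIntegrable _ _)
      have hbd : ‖∫ s in (t - r t)..t, deriv ε s (Sum.inl i)‖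
          ≤ Real.sqrt (W / p₁) * |t - (t - r t)| := by
        apply intervalIntegral.norm_integral_le_of_norm_le_const
        intro s hs
        rw [Set.uIoc_of_le hle] at hs
        have hs0 : (0:ℝ) ≤ s := by
          have := hs.1; linarith
        rw [hodel s hs0 i, Real.norm_eq_abs]
        have h8 := hyW s ⟨by linarith [hs.1], hs.2⟩ i
        have h9 : |ε s (Sum.inr i)| = Real.sqrt ((ε s (Sum.inr i)) ^ 2) :=
          (Real.sqrt_sq_eq_abs _).symm
        rw [h9]
        exact Real.sqrt_le_sqrt h8
      have h10 : d0 i = ∫ s in (t - r t)..t, deriv ε s (Sum.inl i) := by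
        rw [hd0]
        simp only [Pi.sub_apply]
        rw [hw0, hFTC]
      rw [h10, ← Real.norm_eq_abs]
      calc ‖∫ s in (t - r t)..t, deriv ε s (Sum.inl i)‖
          ≤ Real.sqrt (W / p₁) * |t - (t - r t)| := hbd
        _ = Real.sqrt (W / p₁) * r t := by
            rw [show t - (t - r t) = r t by ring, abs_of_pos hrpos]
        _ ≤ Real.sqrt (W / p₁) * τ :=
            mul_le_mul_of_nonneg_left hrlt.le (Real.sqrt_nonneg _)
        _ = τ * Real.sqrt (W / p₁) := mul_comm _ _
    have hD : (∑ i, d0 i * d0 i) ≤ (n:ℝ) * (τ ^ 2 * (W / p₁)) := by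
      have h1 : ∀ i : Fin n, d0 i * d0 i ≤ τ ^ 2 * (W / p₁) := by
        intro i
        have h2 := hdb i
        have h3 : d0 i * d0 i = |d0 i| * |d0 i| := (abs_mul_abs_self _).symm
        rw [h3]
        calc |d0 i| * |d0 i| ≤ (τ * Real.sqrt (W / p₁)) * (τ * Real.sqrt (W / p₁)) :=
              mul_le_mul h2 h2 (abs_nonneg _) (by positivity)
          _ = τ ^ 2 * (Real.sqrt (W / p₁) * Real.sqrt (W / p₁)) := by ring
          _ = τ ^ 2 * (W / p₁) := by rw [Real.mul_self_sqrt hWp]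
      calc (∑ i, d0 i * d0 i) ≤ ∑ _i : Fin n, τ ^ 2 * (W / p₁) :=
            Finset.sum_le_sum (fun i _ => h1 i)
        _ = (n:ℝ) * (τ ^ 2 * (W / p₁)) := by
            rw [Finset.sum_const, Finset.card_univ, Fintype.card_fin, nsmul_eq_mul]
    -- the cross terms
    have hHdHd : (∑ i, Hd i * Hd i) ≤ μ * (∑ i, d0 i * d0 i) := by
      have h1 := Lem2 (σ t) d0
      rw [← hHd] at h1
      exact h1
    obtain ⟨Q, hQ⟩ : ∃ Q : ℝ, Q = τ * (Real.sqrt (μ * (n:ℝ)) * (W / p₁)) := ⟨_, rfl⟩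
    have hQnn : 0 ≤ Q := by
      rw [hQ]
      have h0 := Real.sqrt_nonneg (μ * (n:ℝ))
      positivity
    have hμn : Real.sqrt (μ * (n:ℝ)) * Real.sqrt (μ * (n:ℝ)) = μ * (n:ℝ) :=
      Real.mul_self_sqrt (by positivity)
    have hQ2 : Q ^ 2 = μ * (n:ℝ) * τ ^ 2 * (W / p₁) ^ 2 := by
      calc Q ^ 2 = (Real.sqrt (μ * (n:ℝ)) * Real.sqrt (μ * (n:ℝ)))
            * (τ ^ 2 * (W / p₁) ^ 2) := by rw [hQ]; ring
        _ = μ * (n:ℝ) * τ ^ 2 * (W / p₁) ^ 2 := by rw [hμn]; ring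
    have hcross : ∀ v : Fin n → ℝ, (∑ i, v i * v i) ≤ W / p₁ →
        (∑ i, v i * Hd i) ≤ Q := by
      intro v hvW
      have hvnn : 0 ≤ ∑ i, v i * v i := Finset.sum_nonneg fun i _ => mul_self_nonneg _
      have hHdnn : 0 ≤ ∑ i, Hd i * Hd i := Finset.sum_nonneg fun i _ => mul_self_nonneg _
      have h1 := hCS v Hd
      have h3 : (∑ i, Hd i * Hd i) ≤ μ * ((n:ℝ) * (τ ^ 2 * (W / p₁))) :=
        le_trans hHdHd (mul_le_mul_of_nonneg_left hD mu_nonneg)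
      have h4 : (∑ i, v i * v i) * (∑ i, Hd i * Hd i)
          ≤ (W / p₁) * (μ * ((n:ℝ) * (τ ^ 2 * (W / p₁)))) :=
        mul_le_mul hvW h3 hHdnn hWp
      have h2 : (∑ i, v i * Hd i) ^ 2 ≤ Q ^ 2 := by
        rw [hQ2]
        calc (∑ i, v i * Hd i) ^ 2 ≤ (∑ i, v i * v i) * (∑ i, Hd i * Hd i) := h1
          _ ≤ (W / p₁) * (μ * ((n:ℝ) * (τ ^ 2 * (W / p₁)))) := h4
          _ = μ * (n:ℝ) * τ ^ 2 * (W / p₁) ^ 2 := by ring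
      exact (aux_abs2 hQnn h2).2
    have hSyd' : Syd ≤ Q := by
      rw [hSyde]; exact hcross (fun i => ε t (Sum.inr i)) (by rw [← hYe]; exact hYW)
    have hSxd' : Sxd ≤ Q := by
      rw [hSxde]; exact hcross (fun i => ε t (Sum.inl i)) (by rw [← hXe]; exact hXW)
    -- assembling everything
    have h13 : a * p₂ = 2 * α := by rw [ha]; field_simp
    have h14 : (2 + k) * Q = (K * τ) * W := by
      rw [hQ, hK]; field_simp
    have hVub' : V t ≤ p₂ * (X + Y) := by rw [hXe, hYe]; exact hVub t
    have h15 := mul_le_mul_of_nonneg_left hVub' hapos.le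
    have h16 : a * (p₂ * (X + Y)) = 2 * α * (X + Y) := by rw [← mul_assoc, h13]
    have h11 := mul_le_mul_of_nonneg_left hSxd' k_pos.le
    rw [E1']
    linarith only [hmain, hSyd', h11, h15, h16, h14]
  -- apply the Halanay-type convergence lemma
  have hVlim := halanay V hVcont hV0 hVdiff a (K * τ) τ τ hapos hbnn hblt hτpos hineq
  -- conclude coordinatewise convergence
  rw [tendsto_pi_nhds]
  intro j
  have hcoordsq : ∀ s : ℝ, (ε s j) ^ 2 ≤ V s / p₁ := by
    intro s
    have h2 := hVlb s
    have h3 : ε s j * ε s j ≤ (∑ i, ε s (Sum.inl i) * ε s (Sum.inl i))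
        + (∑ i, ε s (Sum.inr i) * ε s (Sum.inr i)) := by
      cases j with
      | inl i =>
        have h4 : ε s (Sum.inl i) * ε s (Sum.inl i)
            ≤ ∑ i', ε s (Sum.inl i') * ε s (Sum.inl i') :=
          Finset.single_le_sum (f := fun i' => ε s (Sum.inl i') * ε s (Sum.inl i'))
            (fun i' _ => mul_self_nonneg _) (Finset.mem_univ i)
        linarith only [h4, hYnn s]
      | inr i =>
        have h4 : ε s (Sum.inr i) * ε s (Sum.inr i)
            ≤ ∑ i', ε s (Sum.inr i') * ε s (Sum.inr i') :=
          Finset.single_le_sum (f := fun i' => ε s (Sum.inr i') * ε s (Sum.inr i'))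
            (fun i' _ => mul_self_nonneg _) (Finset.mem_univ i)
        linarith only [h4, hXnn s]
    rw [pow_two, le_div_iff₀ hp₁pos]
    have h7 := mul_le_mul_of_nonneg_left h3 hp₁pos.le
    linarith only [h2, h7]
  have hsq0 : Filter.Tendsto (fun s => (ε s j) ^ 2) Filter.atTop (nhds 0) := by
    apply squeeze_zero (fun s => sq_nonneg _) hcoordsq
    simpa using hVlim.div_const p₁
  have habs : Filter.Tendsto (fun s => |ε s j|) Filter.atTop (nhds 0) := by
    have h5 := (Real.continuous_sqrt.tendsto 0).comp hsq0
    simp only [Function.comp_def, Real.sqrt_sq_eq_abs, Real.sqrt_zero] at h5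
    exact h5
  have h6 : Filter.Tendsto (fun s => ε s j) Filter.atTop (nhds 0) :=
    (tendsto_zero_iff_abs_tendsto_zero _).mpr habs
  simpa using h6
end
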